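/- arXiv:2004.03245 — 8 statements merged into one kernel-verified Lean document; each statement's English description precedes it below -/
import Mathlib

section
/- There exists a real number d₀ such that for every real d ≥ d₀ there is an integer n₀(d) such that for every integer n ≥ n₀(d) the following holds: if G is a balanced bipartite graph of order 2n that has at most d·n edges, then G has a bihole of order at least (ln(d)/(8d))·n. -/
open Finset

/-- `A`, `B` form a bipartition of the simple graph `G`: they are disjoint,
cover all vertices, and every edge joins `A` to `B`. -/
def IsBipartition {V : Type} [DecidableEq V] [Fintype V] (G : SimpleGraph V) (A B : Finset V) : Prop :=
  Disjoint A B ∧ A ∪ B = Finset.univ ∧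
    ∀ u v : V, G.Adj u v → (u ∈ A ∧ v ∈ B) ∨ (u ∈ B ∧ v ∈ A)

/-- `G` (with bipartition `A`, `B`) has a bihole of order `k`: an independent
set `I` with `|I ∩ A| = |I ∩ B| = k`. -/
def HasBihole {V : Type} [DecidableEq V] [Fintype V] (G : SimpleGraph V) (A B : Finset V) (k : ℕ) : Prop :=
  ∃ I : Finset V, (∀ u ∈ I, ∀ v ∈ I, ¬ G.Adj u v) ∧ (I ∩ A).card = k ∧ (I ∩ B).card = k

lemma choose_key (s n : ℕ) : ∀ D : ℕ, n.choose s * (n - D - s)^D ≤ n^D * (n - D).choose s := by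
  intro D
  induction D with
  | zero => simp
  | succ D ih =>
    have hstep : (n - D).choose s * (n - (D+1) - s) ≤ n * (n - (D+1)).choose s := by
      rcases Nat.eq_zero_or_pos (n - D) with h | h
      · have h0 : n - (D+1) - s = 0 := by omega
        simp [h0]
      · obtain ⟨m, hm⟩ : ∃ m, n - D = m + 1 := ⟨n - D - 1, by omega⟩
        have h1 : n - (D+1) = m := by omega
        rw [hm, h1]
        calc (m+1).choose s * (m - s) ≤ (m+1).choose s * (m+1-s) :=
              Nat.mul_le_mul_left _ (by omega)
          _ = m.choose s * (m+1) := (Nat.choose_mul_succ_eq m s).symm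
          _ ≤ m.choose s * n := Nat.mul_le_mul_left _ (by omega)
          _ = n * m.choose s := Nat.mul_comm _ _
    calc n.choose s * (n - (D+1) - s)^(D+1)
        = n.choose s * (n - (D+1) - s)^D * (n - (D+1) - s) := by ring
      _ ≤ n.choose s * (n - D - s)^D * (n - (D+1) - s) :=
          Nat.mul_le_mul_right _ (Nat.mul_le_mul_left _ (Nat.pow_le_pow_left (by omega) D))
      _ ≤ (n^D * (n - D).choose s) * (n - (D+1) - s) := Nat.mul_le_mul_right _ ih
      _ = n^D * ((n - D).choose s * (n - (D+1) - s)) := by ring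
      _ ≤ n^D * (n * (n - (D+1)).choose s) := Nat.mul_le_mul_left _ hstep
      _ = n^(D+1) * (n - (D+1)).choose s := by ring

lemma exp_one_sub (x : ℝ) (h0 : 0 ≤ x) (h1 : x ≤ 1/3) : Real.exp (-(1.5*x)) ≤ 1 - x := by
  have h := Real.add_one_le_exp (1.5*x)
  have hpos : (0:ℝ) < 1 + 1.5*x := by linarith
  rw [Real.exp_neg]
  have h3 : (Real.exp (1.5*x))⁻¹ ≤ (1 + 1.5*x)⁻¹ := by
    apply inv_anti₀ hpos; linarith
  refine h3.trans ?_
  rw [inv_eq_one_div, div_le_iff₀ hpos]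
  nlinarith


set_option maxHeartbeats 1000000 in
/-- There exists a real `d₀` such that for every real `d ≥ d₀` there is an
integer `n₀` such that for every `n ≥ n₀`: every balanced bipartite graph of
order `2n` with at most `d·n` edges has a bihole of order at least
`(ln d / (8d)) · n`. -/
theorem stmt0 :
    ∃ d₀ : ℝ, ∀ d : ℝ, d ≥ d₀ → ∃ n₀ : ℕ, ∀ n : ℕ, n ≥ n₀ →
      ∀ (V : Type) [DecidableEq V] [Fintype V] (G : SimpleGraph V) [DecidableRel G.Adj]
        (A B : Finset V), IsBipartition G A B → A.card = n → B.card = n →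
        (G.edgeFinset.card : ℝ) ≤ d * n →
        ∃ k : ℕ, HasBihole G A B k ∧ (k : ℝ) ≥ (Real.log d / (8 * d)) * n := by
  classical
  refine ⟨Real.exp 100, fun d hd => ?_⟩
  have hd0 : (0:ℝ) < d := lt_of_lt_of_le (Real.exp_pos 100) hd
  set L := Real.log d with hLdef
  have hL100 : 100 ≤ L := by
    have := Real.log_le_log (Real.exp_pos 100) hd
    rwa [Real.log_exp] at this
  have hdexp : Real.exp L = d := Real.exp_log hd0
  have hd100 : (100:ℝ) ≤ d := by
    have := Real.add_one_le_exp (100:ℝ); linarith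
  set p := L / (8 * d) with hpdef
  have hp0 : 0 < p := div_pos (by linarith) (by linarith)
  have hexpL : (1 + L/2)^2 ≤ Real.exp L := by
    have h1 := Real.add_one_le_exp (L/2)
    have h2 : Real.exp L = Real.exp (L/2) * Real.exp (L/2) := by
      rw [← Real.exp_add]; ring_nf
    nlinarith [Real.exp_pos (L/2)]
  have hp100 : p ≤ 1/100 := by
    rw [hpdef, div_le_iff₀ (by linarith : (0:ℝ) < 8*d)]
    nlinarith
  set D := ⌈(4:ℝ)*d⌉₊ with hDdef
  have hD1 : 4*d ≤ (D:ℝ) := Nat.le_ceil _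
  have hD2 : (D:ℝ) ≤ 4*d+1 := le_of_lt (Nat.ceil_lt_add_one (by positivity))
  refine ⟨⌈100*((D:ℝ)+1)/p⌉₊ + 1, fun n hn V _ _ G _ A B hbip hA hB hE => ?_⟩
  obtain ⟨hdisj, hcover, hadj⟩ := hbip
  have hn1 : 1 ≤ n := by omega
  have hn0 : (0:ℝ) < n := by exact_mod_cast Nat.pos_of_ne_zero (by omega)
  have hnR : 100*((D:ℝ)+1)/p ≤ (n:ℝ) := by
    calc 100*((D:ℝ)+1)/p ≤ (⌈100*((D:ℝ)+1)/p⌉₊ : ℝ) := Nat.le_ceil _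
      _ ≤ (n:ℝ) := by exact_mod_cast le_trans (Nat.le_succ _) hn
  have hpn : 100*((D:ℝ)+1) ≤ p * n := by
    rw [div_le_iff₀ hp0] at hnR; nlinarith
  set s := ⌈p * (n:ℝ)⌉₊ with hsdef
  have hs1 : p * n ≤ (s:ℝ) := Nat.le_ceil _
  have hs2 : (s:ℝ) ≤ p*n + 1 := le_of_lt (Nat.ceil_lt_add_one (by positivity))
  have hD0 : (0:ℝ) ≤ (D:ℝ) := by positivity
  have hone : (1:ℝ) ≤ p*n/100 := by linarith
  have hsD : (s:ℝ) + D ≤ (101/100) * (p*n) := by linarith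
  have hpn_n : p * n ≤ n/100 := by nlinarith
  have hsDn3 : (s:ℝ) + D ≤ n/3 := by nlinarith
  have hsDn : s + D ≤ n := by
    have h : ((s + D : ℕ):ℝ) ≤ (n:ℝ) := by push_cast; linarith
    exact_mod_cast h
  have hsn : s ≤ n := by omega
  -- neighbors of B-vertices lie in A
  have hNsub : ∀ b ∈ B, G.neighborFinset b ⊆ A := by
    intro b hb v hv
    rw [SimpleGraph.mem_neighborFinset] at hv
    rcases hadj b v hv with ⟨hbA, _⟩ | ⟨_, hvA⟩
    · exact absurd hbA (Finset.disjoint_right.mp hdisj hb)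
    · exact hvA
  have hdegsum : ∑ b ∈ B, G.degree b ≤ 2 * G.edgeFinset.card := by
    rw [← SimpleGraph.sum_degrees_eq_twice_card_edges]
    exact Finset.sum_le_sum_of_subset (Finset.subset_univ B)
  set Bgood := B.filter (fun b => G.degree b ≤ D) with hBgooddef
  have hBgood_card : (n:ℝ)/2 ≤ (Bgood.card:ℝ) := by
    set Bbad := B.filter (fun b => ¬ (G.degree b ≤ D)) with hBbaddef
    have hsplit : Bgood.card + Bbad.card = n := by
      rw [hBgooddef, hBbaddef, Finset.card_filter_add_card_filter_not, hB]
    have hbadsum : Bbad.card * (D + 1) ≤ ∑ b ∈ Bbad, G.degree b := by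
      rw [← smul_eq_mul]
      exact Finset.card_nsmul_le_sum _ _ _ (fun b hb => by
        have := (Finset.mem_filter.mp hb).2; omega)
    have hbadsum2 : ∑ b ∈ Bbad, G.degree b ≤ ∑ b ∈ B, G.degree b :=
      Finset.sum_le_sum_of_subset (Finset.filter_subset _ _)
    have hnat : Bbad.card * (D+1) ≤ 2 * G.edgeFinset.card :=
      le_trans hbadsum (le_trans hbadsum2 hdegsum)
    have hReal : (Bbad.card : ℝ) * ((D:ℝ)+1) ≤ 2 * (d * n) := by
      calc (Bbad.card:ℝ) * ((D:ℝ)+1) = ((Bbad.card * (D+1) : ℕ) : ℝ) := by push_cast; ring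
        _ ≤ ((2 * G.edgeFinset.card : ℕ):ℝ) := by exact_mod_cast hnat
        _ ≤ 2 * (d*n) := by push_cast; linarith
    have hbad0 : (0:ℝ) ≤ (Bbad.card:ℝ) := Nat.cast_nonneg _
    have hbad4d : (Bbad.card:ℝ)*(4*d) ≤ 2*(d*n) := by nlinarith
    have hbad_le : (Bbad.card:ℝ) ≤ n/2 := by nlinarith [hbad4d, hd0, hn0]
    have hcast : (Bgood.card:ℝ) + Bbad.card = n := by exact_mod_cast hsplit
    linarith
  -- double counting
  set P := Finset.powersetCard s A with hPdef
  have hswap : ∑ b ∈ Bgood, (P.filter (fun A' => ∀ a ∈ A', ¬ G.Adj b a)).card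
      = ∑ A' ∈ P, (Bgood.filter (fun b => ∀ a ∈ A', ¬ G.Adj b a)).card := by
    simp_rw [Finset.card_filter]
    exact Finset.sum_comm
  have hcount : ∀ b ∈ Bgood, (n - D).choose s ≤ (P.filter (fun A' => ∀ a ∈ A', ¬ G.Adj b a)).card := by
    intro b hb
    obtain ⟨hbB, hdegb⟩ := Finset.mem_filter.mp hb
    have hfil : P.filter (fun A' => ∀ a ∈ A', ¬ G.Adj b a)
        = Finset.powersetCard s (A \ G.neighborFinset b) := by
      ext A'
      simp only [Finset.mem_filter, hPdef, Finset.mem_powersetCard]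
      constructor
      · rintro ⟨⟨hsub, hcard⟩, hq⟩
        refine ⟨fun a ha => Finset.mem_sdiff.mpr ⟨hsub ha, ?_⟩, hcard⟩
        rw [SimpleGraph.mem_neighborFinset]; exact hq a ha
      · rintro ⟨hsub, hcard⟩
        refine ⟨⟨fun a ha => (Finset.mem_sdiff.mp (hsub ha)).1, hcard⟩, fun a ha hadj' => ?_⟩
        exact (Finset.mem_sdiff.mp (hsub ha)).2 ((SimpleGraph.mem_neighborFinset G b a).mpr hadj')
    rw [hfil, Finset.card_powersetCard, Finset.card_sdiff_of_subset (hNsub b hbB), hA]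
    have hdeg' : (G.neighborFinset b).card = G.degree b := rfl
    rw [hdeg']
    exact Nat.choose_le_choose s (by omega)
  -- main analytic inequality
  set y : ℝ := (n:ℝ) - D - s with hydef
  have hy0 : 0 < y := by rw [hydef]; linarith
  have hx0 : 0 ≤ ((s:ℝ) + D)/n := by positivity
  have hx1 : ((s:ℝ)+D)/n ≤ 1/3 := by rw [div_le_iff₀ hn0]; linarith
  have hy_lb : (n:ℝ) * Real.exp (-(1.5 * (((s:ℝ) + D)/n))) ≤ y := by
    have he := exp_one_sub _ hx0 hx1
    have h2 : (n:ℝ) * (1 - ((s:ℝ)+D)/n) = y := by field_simp [hydef]; ring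
    calc (n:ℝ) * Real.exp (-(1.5 * (((s:ℝ) + D)/n)))
        ≤ (n:ℝ) * (1 - ((s:ℝ)+D)/n) := mul_le_mul_of_nonneg_left he hn0.le
      _ = y := h2
  have hxDle : 1.5 * (((s:ℝ)+D)/n) * (D:ℝ) ≤ 0.76 * L := by
    rw [show (1.5:ℝ) * (((s:ℝ)+D)/n) * D = (1.5*((s:ℝ)+D)*(D:ℝ))/n by ring, div_le_iff₀ hn0]
    have h2 : (D:ℝ) ≤ 4.01*d := by linarith
    have h4 : p*n*d = L/8*n := by rw [hpdef]; field_simp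
    have hprod : ((s:ℝ)+D)*(D:ℝ) ≤ (101/100*(p*n))*(4.01*d) :=
      mul_le_mul hsD h2 hD0 (by positivity)
    nlinarith
  have hypow : (n:ℝ)^D * Real.exp (-(0.76*L)) ≤ y^D := by
    have hpow : ((n:ℝ) * Real.exp (-(1.5 * (((s:ℝ) + D)/n))))^D ≤ y^D :=
      pow_le_pow_left₀ (by positivity) hy_lb D
    have hexpand : ((n:ℝ) * Real.exp (-(1.5 * (((s:ℝ) + D)/n))))^D
        = (n:ℝ)^D * Real.exp ((D:ℕ) * (-(1.5 * (((s:ℝ) + D)/n)))) := by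
      rw [mul_pow, Real.exp_nat_mul]
    have hmono : Real.exp (-(0.76*L)) ≤ Real.exp ((D:ℕ) * (-(1.5 * (((s:ℝ) + D)/n)))) := by
      apply Real.exp_le_exp.mpr
      have : ((D:ℕ):ℝ) * (-(1.5 * (((s:ℝ) + D)/n))) = -(1.5 * (((s:ℝ)+D)/n) * (D:ℝ)) := by
        push_cast; ring
      rw [this]
      linarith
    calc (n:ℝ)^D * Real.exp (-(0.76*L))
        ≤ (n:ℝ)^D * Real.exp ((D:ℕ) * (-(1.5 * (((s:ℝ) + D)/n)))) :=
          mul_le_mul_of_nonneg_left hmono (by positivity)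
      _ = ((n:ℝ) * Real.exp (-(1.5 * (((s:ℝ) + D)/n))))^D := hexpand.symm
      _ ≤ y^D := hpow
  have h2s : 2*(s:ℝ) ≤ (n:ℝ) * Real.exp (-(0.76*L)) := by
    have hLexp : 0.2525 * L ≤ Real.exp (0.24*L) := by
      have h1 := Real.add_one_le_exp (0.12*L)
      have h2 : Real.exp (0.24*L) = Real.exp (0.12*L) * Real.exp (0.12*L) := by
        rw [← Real.exp_add]; ring_nf
      nlinarith
    have hsplit : Real.exp (-(0.76*L)) = Real.exp (0.24*L) * Real.exp (-L) := by
      rw [← Real.exp_add]; ring_nf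
    have hdinv : Real.exp (-L) = d⁻¹ := by rw [Real.exp_neg, hdexp]
    have h3 : 2*(s:ℝ) ≤ 2.02*(p*n) := by linarith
    have h4 : 2.02*(p*n) = 0.2525*L*d⁻¹*n := by rw [hpdef]; field_simp; ring
    have hd_inv_pos : (0:ℝ) < d⁻¹ := by positivity
    calc 2*(s:ℝ) ≤ 0.2525*L*d⁻¹*n := by rw [← h4]; exact h3
      _ ≤ Real.exp (0.24*L)*d⁻¹*n := by nlinarith
      _ = n * Real.exp (-(0.76*L)) := by rw [hsplit, hdinv]; ring
  have hmain : 2*(s:ℝ) * (n:ℝ)^D ≤ (n:ℝ) * y^D := by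
    calc 2*(s:ℝ)*(n:ℝ)^D ≤ ((n:ℝ)*Real.exp (-(0.76*L))) * (n:ℝ)^D :=
          mul_le_mul_of_nonneg_right h2s (by positivity)
      _ = (n:ℝ) * ((n:ℝ)^D * Real.exp (-(0.76*L))) := by ring
      _ ≤ (n:ℝ) * y^D := mul_le_mul_of_nonneg_left hypow hn0.le
  -- the crunch inequality in ℕ
  have hcrunch : s * n.choose s ≤ Bgood.card * (n - D).choose s := by
    have hyeq : ((n - D - s : ℕ):ℝ) = y := by
      rw [hydef, Nat.cast_sub (by omega : s ≤ n - D), Nat.cast_sub (by omega : D ≤ n)]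
    have keyR : (n.choose s:ℝ) * y^D ≤ (n:ℝ)^D * ((n-D).choose s:ℝ) := by
      have h' : ((n.choose s : ℕ):ℝ) * (((n-D-s:ℕ)):ℝ)^D ≤ ((n:ℝ))^D * (((n-D).choose s : ℕ):ℝ) := by
        exact_mod_cast choose_key s n D
      rwa [hyeq] at h'
    have hyD_pos : 0 < y^D := by positivity
    have hcR : (0:ℝ) ≤ ((n-D).choose s : ℝ) := by positivity
    have hRtarget : (s:ℝ) * (n.choose s:ℝ) ≤ (Bgood.card:ℝ) * ((n-D).choose s:ℝ) := by
      have step1 : ((s:ℝ) * (n.choose s:ℝ)) * y^D ≤ (s:ℝ) * ((n:ℝ)^D * ((n-D).choose s:ℝ)) := by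
        calc ((s:ℝ) * (n.choose s:ℝ)) * y^D = (s:ℝ) * ((n.choose s:ℝ) * y^D) := by ring
          _ ≤ (s:ℝ) * ((n:ℝ)^D * ((n-D).choose s:ℝ)) :=
              mul_le_mul_of_nonneg_left keyR (by positivity)
      have hsny : (s:ℝ) * (n:ℝ)^D ≤ (n:ℝ)/2 * y^D := by linarith
      have step2 : (s:ℝ) * ((n:ℝ)^D * ((n-D).choose s:ℝ)) ≤ ((n:ℝ)/2 * ((n-D).choose s:ℝ)) * y^D := by
        calc (s:ℝ) * ((n:ℝ)^D * ((n-D).choose s:ℝ))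
            = ((s:ℝ)*(n:ℝ)^D) * ((n-D).choose s:ℝ) := by ring
          _ ≤ ((n:ℝ)/2 * y^D) * ((n-D).choose s:ℝ) := mul_le_mul_of_nonneg_right hsny hcR
          _ = ((n:ℝ)/2 * ((n-D).choose s:ℝ)) * y^D := by ring
      have step3 : ((n:ℝ)/2 * ((n-D).choose s:ℝ)) * y^D ≤ ((Bgood.card:ℝ) * ((n-D).choose s:ℝ)) * y^D := by
        apply mul_le_mul_of_nonneg_right _ hyD_pos.le
        exact mul_le_mul_of_nonneg_right hBgood_card hcR
      exact le_of_mul_le_mul_right (le_trans (le_trans step1 step2) step3) hyD_pos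
    exact_mod_cast hRtarget
  -- pigeonhole
  have hsum : ∑ _A' ∈ P, s ≤ ∑ A' ∈ P, (Bgood.filter (fun b => ∀ a ∈ A', ¬ G.Adj b a)).card := by
    rw [← hswap]
    calc ∑ _A' ∈ P, s = P.card * s := by rw [Finset.sum_const, smul_eq_mul]
      _ = n.choose s * s := by rw [hPdef, Finset.card_powersetCard, hA]
      _ ≤ Bgood.card * (n-D).choose s := by rw [mul_comm]; exact hcrunch
      _ = ∑ _b ∈ Bgood, (n-D).choose s := by rw [Finset.sum_const, smul_eq_mul]
      _ ≤ ∑ b ∈ Bgood, (P.filter (fun A' => ∀ a ∈ A', ¬ G.Adj b a)).card :=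
          Finset.sum_le_sum hcount
  have hPne : P.Nonempty := by
    rw [hPdef]; exact Finset.powersetCard_nonempty.mpr (by rw [hA]; exact hsn)
  obtain ⟨A', hA'P, hA's⟩ := Finset.exists_le_of_sum_le hPne hsum
  obtain ⟨hA'sub, hA'card⟩ := Finset.mem_powersetCard.mp (by rwa [hPdef] at hA'P)
  obtain ⟨B'', hB''sub, hB''card⟩ := Finset.exists_subset_card_eq hA's
  have hB''good : B'' ⊆ Bgood := fun w hw => Finset.mem_of_mem_filter w (hB''sub hw)
  have hB''B : B'' ⊆ B := fun w hw => Finset.mem_of_mem_filter w (hB''good hw)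
  have hB''Q : ∀ b ∈ B'', ∀ a ∈ A', ¬ G.Adj b a := by
    intro b hb
    exact (Finset.mem_filter.mp (hB''sub hb)).2
  refine ⟨s, ⟨A' ∪ B'', ?_, ?_, ?_⟩, ?_⟩
  · intro u hu v hv huv
    have hmemA : ∀ w, w ∈ A' ∪ B'' → w ∈ A → w ∈ A' := by
      intro w hw hwA
      rcases Finset.mem_union.mp hw with h | h
      · exact h
      · exact absurd hwA (Finset.disjoint_right.mp hdisj (hB''B h))
    have hmemB : ∀ w, w ∈ A' ∪ B'' → w ∈ B → w ∈ B'' := by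
      intro w hw hwB
      rcases Finset.mem_union.mp hw with h | h
      · exact absurd hwB (Finset.disjoint_left.mp hdisj (hA'sub h))
      · exact h
    rcases hadj u v huv with ⟨huA, hvB⟩ | ⟨huB, hvA⟩
    · exact hB''Q v (hmemB v hv hvB) u (hmemA u hu huA) huv.symm
    · exact hB''Q u (hmemB u hu huB) v (hmemA v hv hvA) huv
  · have hIA : (A' ∪ B'') ∩ A = A' := by
      ext w
      simp only [Finset.mem_inter, Finset.mem_union]
      constructor
      · rintro ⟨h1 | h1, h2⟩
        · exact h1
        · exact absurd h2 (Finset.disjoint_right.mp hdisj (hB''B h1))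
      · intro h
        exact ⟨Or.inl h, hA'sub h⟩
    rw [hIA, hA'card]
  · have hIB : (A' ∪ B'') ∩ B = B'' := by
      ext w
      simp only [Finset.mem_inter, Finset.mem_union]
      constructor
      · rintro ⟨h1 | h1, h2⟩
        · exact absurd h2 (Finset.disjoint_left.mp hdisj (hA'sub h1))
        · exact h1
      · intro h
        exact ⟨Or.inr h, hB''B h⟩
    rw [hIB, hB''card]
  · exact hs1
end

section
/- If G is a balanced bipartite graph of order 2n that has at most d·n edges for some non-negative real d, then G has a bihole of order at least n/(d+1) − 2. -/
/-!
Take `k = ⌊n / (d + 1)⌋`. A `k`-subset `S` of `A` of minimal degree sum has degree sum at most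
`k / n` times that of `A`, which is at most `k e / n ≤ d k` because `A` is independent. So `S` has
at most `d k ≤ n - k` neighbours in `B`, and any `k` vertices of `B` outside them complete a
bihole with `S`.
-/

open Finset

namespace Finset

variable {α M : Type*} [DecidableEq α] [AddCommMonoid M] [LinearOrder M]

theorem exists_subset_card_eq_forall_le_of_mem_sdiff [IsOrderedCancelAddMonoid M]
    (f : α → M) {s : Finset α} {k : ℕ} (hk : k ≤ #s) :
    ∃ t ⊆ s, #t = k ∧ ∀ a ∈ t, ∀ b ∈ s \ t, f a ≤ f b := by
  obtain ⟨t, ht, htmin⟩ := exists_min_image (s.powersetCard k) (fun t ↦ ∑ a ∈ t, f a)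
    (powersetCard_nonempty.2 hk)
  obtain ⟨hts, htk⟩ := mem_powersetCard.1 ht
  refine ⟨t, hts, htk, fun a ha b hb ↦ ?_⟩
  obtain ⟨hbs, hbt⟩ := mem_sdiff.1 hb
  have hb' : b ∉ t.erase a := fun h ↦ hbt (mem_of_mem_erase h)
  have hswap : insert b (t.erase a) ∈ s.powersetCard k := by
    refine mem_powersetCard.2 ⟨insert_subset hbs ((erase_subset a t).trans hts), ?_⟩
    rw [card_insert_of_notMem hb', card_erase_of_mem ha, htk,
      Nat.sub_add_cancel (htk ▸ card_pos.2 ⟨a, ha⟩)]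
  have := htmin _ hswap
  rw [sum_insert hb', ← add_sum_erase t f ha] at this
  exact le_of_add_le_add_right this

theorem card_nsmul_sum_le_of_forall_le [IsOrderedAddMonoid M] (f : α → M) {s t : Finset α}
    (hts : t ⊆ s) (hle : ∀ a ∈ t, ∀ b ∈ s \ t, f a ≤ f b) :
    #s • ∑ a ∈ t, f a ≤ #t • ∑ a ∈ s, f a := by
  have hsdiff : #(s \ t) • ∑ a ∈ t, f a ≤ #t • ∑ b ∈ s \ t, f b := by
    rw [← sum_const, smul_sum]
    exact sum_le_sum fun b hb ↦ sum_le_card_nsmul t f (f b) fun a ha ↦ hle a ha b hb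
  calc #s • ∑ a ∈ t, f a = #(s \ t) • ∑ a ∈ t, f a + #t • ∑ a ∈ t, f a := by
        rw [← add_nsmul, card_sdiff_add_card_eq_card hts]
    _ ≤ #t • ∑ b ∈ s \ t, f b + #t • ∑ a ∈ t, f a := by gcongr
    _ = #t • ∑ a ∈ s, f a := by rw [← nsmul_add, sum_sdiff hts]

theorem exists_subset_card_eq_card_nsmul_sum_le [IsOrderedCancelAddMonoid M] (f : α → M)
    {s : Finset α} {k : ℕ} (hk : k ≤ #s) :
    ∃ t ⊆ s, #t = k ∧ #s • ∑ a ∈ t, f a ≤ k • ∑ a ∈ s, f a := by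
  obtain ⟨t, hts, htk, hle⟩ := exists_subset_card_eq_forall_le_of_mem_sdiff f hk
  exact ⟨t, hts, htk, htk ▸ card_nsmul_sum_le_of_forall_le f hts hle⟩

end Finset

namespace SimpleGraph

variable {V : Type*} [Fintype V] [DecidableEq V] {G : SimpleGraph V} [DecidableRel G.Adj]

theorem IsIndepSet.sum_degree_le_card_edgeFinset {s : Finset V} (hs : G.IsIndepSet (s : Set V)) :
    ∑ v ∈ s, G.degree v ≤ #G.edgeFinset := by
  have hdisj : (s : Set V).PairwiseDisjoint (G.incidenceFinset ·) := by
    intro a ha b hb hab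
    rw [Function.onFun, ← disjoint_coe, coe_incidenceFinset, coe_incidenceFinset,
      Set.disjoint_iff_inter_eq_empty]
    exact G.incidenceSet_inter_incidenceSet_of_not_adj (hs ha hb hab) hab
  calc ∑ v ∈ s, G.degree v = #(s.biUnion (G.incidenceFinset ·)) := by
        simp only [card_biUnion hdisj, card_incidenceFinset_eq_degree]
    _ ≤ #G.edgeFinset := card_le_card (biUnion_subset.2 fun v _ ↦ G.incidenceFinset_subset v)

end SimpleGraph

namespace IsBipartition

variable {V : Type} [DecidableEq V] [Fintype V] {G : SimpleGraph V} {A B : Finset V}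

theorem symm (h : IsBipartition G A B) : IsBipartition G B A :=
  ⟨h.1.symm, union_comm A B ▸ h.2.1, fun u v huv ↦ (h.2.2 u v huv).symm⟩

theorem mem_right_of_adj (h : IsBipartition G A B) {u v : V} (hu : u ∈ A) (huv : G.Adj u v) :
    v ∈ B :=
  (h.2.2 u v huv).elim And.right fun huB ↦ absurd huB.1 (disjoint_left.1 h.1 hu)

theorem isIndepSet_left (h : IsBipartition G A B) : G.IsIndepSet (A : Set V) :=
  fun _ hu _ hv _ huv ↦ disjoint_left.1 h.1 hv (h.mem_right_of_adj hu huv)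

theorem hasBihole_of_subset (h : IsBipartition G A B) {S T : Finset V} {k : ℕ} (hS : S ⊆ A)
    (hT : T ⊆ B) (hST : ∀ a ∈ S, ∀ b ∈ T, ¬ G.Adj a b) (hSk : #S = k) (hTk : #T = k) :
    HasBihole G A B k := by
  refine ⟨S ∪ T, ?_, ?_, ?_⟩
  · intro u hu v hv huv
    rcases mem_union.1 hu with hu | hu <;> rcases mem_union.1 hv with hv | hv
    · exact h.isIndepSet_left (hS hu) (hS hv) huv.ne huv
    · exact hST u hu v hv huv
    · exact hST v hv u hu huv.symm
    · exact h.symm.isIndepSet_left (hT hu) (hT hv) huv.ne huv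
  · rw [union_inter_distrib_right, inter_eq_left.2 hS,
      disjoint_iff_inter_eq_empty.1 (disjoint_of_subset_left hT h.1.symm), union_empty, hSk]
  · rw [union_inter_distrib_right, inter_eq_left.2 hT,
      disjoint_iff_inter_eq_empty.1 (disjoint_of_subset_left hS h.1), empty_union, hTk]

theorem hasBihole_of_mul_card_edgeFinset_le [DecidableRel G.Adj] (h : IsBipartition G A B)
    {k : ℕ} (hkA : k ≤ #A) (hkB : k ≤ #B) (hE : k * #G.edgeFinset ≤ #A * (#B - k)) :
    HasBihole G A B k := by
  obtain ⟨S, hSA, hSk, hSdeg⟩ := exists_subset_card_eq_card_nsmul_sum_le (G.degree ·) hkA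
  set N := S.biUnion (G.neighborFinset ·)
  have hNB : N ⊆ B := biUnion_subset.2 fun a ha _ hv ↦
    h.mem_right_of_adj (hSA ha) ((G.mem_neighborFinset _ _).1 hv)
  have hN : #N ≤ #B - k := by
    rcases (#A).eq_zero_or_pos with hA0 | hA0
    · rw [show k = 0 by omega, Nat.sub_zero]
      exact card_le_card hNB
    refine Nat.le_of_mul_le_mul_left ?_ hA0
    calc #A * #N ≤ #A * ∑ a ∈ S, G.degree a := by
          gcongr
          exact card_biUnion_le.trans_eq
            (sum_congr rfl fun a _ ↦ G.card_neighborFinset_eq_degree a)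
      _ ≤ k * ∑ a ∈ A, G.degree a := hSdeg
      _ ≤ k * #G.edgeFinset := by
          gcongr
          exact h.isIndepSet_left.sum_degree_le_card_edgeFinset
      _ ≤ #A * (#B - k) := hE
  obtain ⟨T, hTN, hTk⟩ := exists_subset_card_eq (s := B \ N) (n := k)
    (by rw [card_sdiff_of_subset hNB]; omega)
  refine h.hasBihole_of_subset hSA (hTN.trans sdiff_subset) ?_ hSk hTk
  intro a ha b hb hab
  exact (mem_sdiff.1 (hTN hb)).2 (mem_biUnion.2 ⟨a, ha, (G.mem_neighborFinset a b).2 hab⟩)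

end IsBipartition

/-- If `G` is a balanced bipartite graph of order `2n` with at most `d·n` edges
for some non-negative real `d`, then `G` has a bihole of order at least
`n/(d+1) − 2`. -/
theorem stmt1 (d : ℝ) (hd : 0 ≤ d) (n : ℕ)
    (V : Type) [DecidableEq V] [Fintype V] (G : SimpleGraph V) [DecidableRel G.Adj]
    (A B : Finset V) (hbip : IsBipartition G A B)
    (hA : A.card = n) (hB : B.card = n)
    (hm : (G.edgeFinset.card : ℝ) ≤ d * n) :
    ∃ k : ℕ, HasBihole G A B k ∧ (k : ℝ) ≥ (n : ℝ) / (d + 1) - 2 := by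
  set k := ⌊(n : ℝ) / (d + 1)⌋₊
  have hkd : (k : ℝ) * (d + 1) ≤ n :=
    (le_div_iff₀ (by positivity)).1 (Nat.floor_le (by positivity))
  have hkn : k ≤ n := by
    have : (k : ℝ) ≤ n := by nlinarith [k.cast_nonneg (α := ℝ)]
    exact_mod_cast this
  have hE : (k : ℝ) * G.edgeFinset.card ≤ n * (n - k : ℕ) := by
    rw [Nat.cast_sub hkn]
    calc (k : ℝ) * G.edgeFinset.card ≤ k * (d * n) := by gcongr
      _ ≤ n * (n - k) := by nlinarith [n.cast_nonneg (α := ℝ)]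
  refine ⟨k, hbip.hasBihole_of_mul_card_edgeFinset_le (hA ▸ hkn) (hB ▸ hkn) ?_, ?_⟩
  · rw [hA, hB]
    exact_mod_cast hE
  · linarith [Nat.sub_one_lt_floor ((n : ℝ) / (d + 1))]
end

section
/- Let n₀, n₁, n₂ be non-negative integers, and let G be a bipartite graph with partite sets A and B such that |A| = |B| = n₀ + n₁ + n₂ and, for each i ∈ {0, 1, 2}, exactly nᵢ vertices of A have degree i in G (so every vertex of A has degree at most 2). Then G has a bihole of order at least (3/4)·n₀ + (1/2)·(n₁ + n₂) − 7/4. -/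
/-!
Vertices of degree zero in `A` are free. View every other `a ∈ A` as its neighbourhood, a set of
one or two vertices of `B`. It suffices to find `T` with `|T| ≤ |B| - k` containing the
neighbourhoods of at least `k` vertices of `A`: these vertices together with `k` vertices of
`B \ T` form a bihole.

Group the neighbourhoods into the connected components of the overlap relation. A component with
`e` members spans at most `e + 1` vertices, and it can be built up one member at a time so that
every intermediate stage also spans at most one vertex more than it has members. Fill the budget
`|B| - k` first with the components spanning at most as many vertices as they have members, then
with the remaining (tree-like) components in decreasing order of size, and finally with part of
one more component. Each started tree-like component costs one vertex; when these are more
numerous than the left-over ones, the left-over components are small enough to be given up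
instead. The choice `4k ≤ 3n₀ + 2(n₁ + n₂) - 4` pays for this.
-/

open Finset

theorem exists_greedy_cut {ι : Type*} [DecidableEq ι] (w : ι → ℕ) (t : Finset ι) (M : ℕ)
    (hM : M < ∑ x ∈ t, w x) :
    ∃ S ⊆ t, ∃ c ∈ t, c ∉ S ∧ ∑ x ∈ S, w x ≤ M ∧ M < ∑ x ∈ S, w x + w c ∧
      (∀ x ∈ S, w c ≤ w x) ∧ ∀ x ∈ t, x ∉ S → w x ≤ w c := by
  induction t using Finset.strongInduction generalizing M with
  | H t ih =>
  have ht : t.Nonempty := by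
    by_contra h
    simp [not_nonempty_iff_eq_empty.1 h] at hM
  obtain ⟨c₀, hc₀, hmax⟩ := exists_max_image t w ht
  by_cases hfirst : M < w c₀
  · exact ⟨∅, empty_subset _, c₀, hc₀, notMem_empty _, by simp, by simpa using hfirst,
      by simp, fun x hx _ => hmax x hx⟩
  have hsum := sum_erase_add t w hc₀
  obtain ⟨S, hS, c, hc, hcS, hle, hlt, hlow, hhigh⟩ :=
    ih _ (erase_ssubset hc₀) (M - w c₀) (by omega)
  have hc₀S : c₀ ∉ S := fun h => by simpa using hS h
  refine ⟨insert c₀ S, insert_subset hc₀ (hS.trans (erase_subset _ _)), c, mem_of_mem_erase hc,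
    ?_, ?_, ?_, ?_, ?_⟩
  · rw [mem_insert, not_or]
    exact ⟨ne_of_mem_erase hc, hcS⟩
  · rw [sum_insert hc₀S]; omega
  · rw [sum_insert hc₀S]; omega
  · rw [forall_mem_insert]
    exact ⟨hmax c (mem_of_mem_erase hc), hlow⟩
  · intro x hx hxS
    rw [mem_insert, not_or] at hxS
    exact hhigh x (mem_erase.2 ⟨hxS.1, hx⟩) hxS.2

/- Items `i` cost `v i` and are worth `e i`; a part of cost `u` of the item `i` left over is
worth at least `u - 1` (for a component of the overlap graph, see
`exists_subset_overlapComponent_card_biUnion_le`). -/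
theorem exists_selection_of_le_add_one {ι : Type*} [DecidableEq ι] (s : Finset ι) (e v : ι → ℕ)
    (hve : ∀ i ∈ s, v i ≤ e i + 1) (m M : ℕ) (hv : ∑ i ∈ s, v i ≤ m) (he : ∑ i ∈ s, e i ≤ m)
    (hM : m + ∑ i ∈ s, e i + 4 ≤ 4 * M) (hMv : M < ∑ i ∈ s, v i) :
    ∃ S ⊆ s, ∃ i ∈ s, i ∉ S ∧ ∃ u ≤ v i,
      ∑ j ∈ S, v j + u ≤ M ∧ ∑ j ∈ s, e j + 1 ≤ ∑ j ∈ S, e j + u + M := by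
  set dense := s.filter fun i => v i ≤ e i
  set trees := s.filter fun i => ¬v i ≤ e i
  have hsplit (f : ι → ℕ) : ∑ i ∈ dense, f i + ∑ i ∈ trees, f i = ∑ i ∈ s, f i :=
    sum_filter_add_sum_filter_not s _ f
  have hdense : ∑ i ∈ dense, v i ≤ ∑ i ∈ dense, e i :=
    sum_le_sum fun i hi => (mem_filter.1 hi).2
  have htree {i} (hi : i ∈ trees) : v i = e i + 1 := by
    have := mem_filter.1 hi; have := hve i this.1; omega
  by_cases hdense_big : M < ∑ i ∈ dense, v i
  · obtain ⟨S, hS, i, hi, hiS, hle, hlt, -, -⟩ := exists_greedy_cut v dense M hdense_big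
    have hSe : ∑ j ∈ S, v j ≤ ∑ j ∈ S, e j :=
      sum_le_sum fun j hj => (mem_filter.1 (hS hj)).2
    exact ⟨S, hS.trans (filter_subset _ _), i, (mem_filter.1 hi).1, hiS, M - ∑ j ∈ S, v j,
      by omega, by omega, by omega⟩
  push Not at hdense_big
  have htrees_big : M - ∑ i ∈ dense, v i < ∑ i ∈ trees, v i := by have := hsplit v; omega
  obtain ⟨S, hS, i, hi, hiS, hle, hlt, hlow, hhigh⟩ := exists_greedy_cut v trees _ htrees_big
  have hdS : Disjoint dense S := disjoint_of_subset_right hS (disjoint_filter_filter_not _ _ _)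
  refine ⟨dense ∪ S, union_subset (filter_subset _ _) (hS.trans (filter_subset _ _)), i,
    (mem_filter.1 hi).1, fun h => ?_, M - ∑ j ∈ dense, v j - ∑ j ∈ S, v j, by omega, ?_, ?_⟩
  · rcases mem_union.1 h with h | h
    · exact (mem_filter.1 hi).2 (mem_filter.1 h).2
    · exact hiS h
  · rw [sum_union hdS]; omega
  rw [sum_union hdS]
  set U := trees \ S
  have hvS : ∑ j ∈ S, v j = ∑ j ∈ S, e j + #S := by
    rw [sum_congr rfl fun j hj => htree (hS hj), sum_add_distrib, sum_const, smul_eq_mul, mul_one]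
  have hvU : ∑ j ∈ U, v j = ∑ j ∈ U, e j + #U := by
    rw [sum_congr rfl fun j hj => htree (sdiff_subset hj), sum_add_distrib, sum_const,
      smul_eq_mul, mul_one]
  have heT : ∑ j ∈ U, e j + ∑ j ∈ S, e j = ∑ j ∈ trees, e j := sum_sdiff hS
  have hvT : ∑ j ∈ U, v j + ∑ j ∈ S, v j = ∑ j ∈ trees, v j := sum_sdiff hS
  have hU : 1 ≤ #U := card_pos.2 ⟨i, mem_sdiff.2 ⟨hi, hiS⟩⟩
  have hsplit_e := hsplit e
  have hsplit_v := hsplit v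
  rcases le_or_gt #U #S with hUS | hSU
  · have hUv : ∑ j ∈ U, v j ≤ #U * v i := by
      simpa using sum_le_card_nsmul U v (v i) fun j hj =>
        hhigh j (mem_sdiff.1 hj).1 (mem_sdiff.1 hj).2
    have hSv : #S * v i ≤ ∑ j ∈ S, v j := by simpa using card_nsmul_le_sum S v (v i) hlow
    rw [htree hi, mul_add, mul_one] at hUv hSv
    have : #U * e i ≤ #S * e i := Nat.mul_le_mul_right _ hUS
    omega
  · omega

section OverlapComponents

variable {α β : Type*} (A : Finset α) (F : α → Finset β)

def overlapGraph : SimpleGraph α :=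
  SimpleGraph.fromRel fun x y => x ∈ A ∧ y ∈ A ∧ ¬Disjoint (F x) (F y)

open Classical in
noncomputable def overlapComponent (a : α) : Finset α :=
  A.filter ((overlapGraph A F).Reachable a)

variable {A F}

theorem overlapGraph_adj {x y : α} (hx : x ∈ A) (hy : y ∈ A) (hxy : x ≠ y)
    (h : ¬Disjoint (F x) (F y)) : (overlapGraph A F).Adj x y :=
  (SimpleGraph.fromRel_adj _ _ _).2 ⟨hxy, Or.inl ⟨hx, hy, h⟩⟩

theorem mem_and_not_disjoint_of_overlapGraph_adj {x y : α} (h : (overlapGraph A F).Adj x y) :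
    y ∈ A ∧ ¬Disjoint (F x) (F y) := by
  rcases ((SimpleGraph.fromRel_adj _ _ _).1 h).2 with ⟨-, hy, hxy⟩ | ⟨hy, -, hyx⟩
  · exact ⟨hy, hxy⟩
  · exact ⟨hy, fun h' => hyx h'.symm⟩

theorem mem_overlapComponent {a b : α} :
    b ∈ overlapComponent A F a ↔ b ∈ A ∧ (overlapGraph A F).Reachable a b := by
  simp [overlapComponent]

theorem overlapComponent_subset (a : α) : overlapComponent A F a ⊆ A :=
  fun _ h => (mem_overlapComponent.1 h).1

theorem mem_overlapComponent_self {a : α} (ha : a ∈ A) : a ∈ overlapComponent A F a :=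
  mem_overlapComponent.2 ⟨ha, .rfl⟩

theorem overlapComponent_eq {a b : α} (h : (overlapGraph A F).Reachable a b) :
    overlapComponent A F a = overlapComponent A F b := by
  ext x
  simp only [mem_overlapComponent]
  exact and_congr_right fun _ => ⟨h.symm.trans, h.trans⟩

theorem overlapComponent_eq_of_mem {a b : α} (hb : b ∈ overlapComponent A F a) :
    overlapComponent A F a = overlapComponent A F b :=
  overlapComponent_eq (mem_overlapComponent.1 hb).2

theorem disjoint_overlapComponent {a b : α}
    (h : overlapComponent A F a ≠ overlapComponent A F b) :
    Disjoint (overlapComponent A F a) (overlapComponent A F b) := by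
  refine disjoint_left.2 fun x hxa hxb => h ?_
  rw [overlapComponent_eq_of_mem hxa, overlapComponent_eq_of_mem hxb]

theorem disjoint_biUnion_overlapComponent [DecidableEq β] {a b : α}
    (h : overlapComponent A F a ≠ overlapComponent A F b) :
    Disjoint ((overlapComponent A F a).biUnion F) ((overlapComponent A F b).biUnion F) := by
  refine disjoint_left.2 fun z hza hzb => h ?_
  obtain ⟨x, hx, hzx⟩ := mem_biUnion.1 hza
  obtain ⟨y, hy, hzy⟩ := mem_biUnion.1 hzb
  rw [overlapComponent_eq_of_mem hx, overlapComponent_eq_of_mem hy]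
  by_cases hxy : x = y
  · rw [hxy]
  refine overlapComponent_eq (overlapGraph_adj (overlapComponent_subset _ hx)
    (overlapComponent_subset _ hy) hxy ?_).reachable
  exact not_disjoint_iff.2 ⟨z, hzx, hzy⟩

theorem card_union_le_card_add_one [DecidableEq β] {s t : Finset β} (hs : #s ≤ 2)
    (hst : ¬Disjoint s t) : #(s ∪ t) ≤ #t + 1 := by
  have := card_union_add_card_inter s t
  have := card_pos.2 (not_disjoint_iff_nonempty_inter.1 hst)
  omega

theorem exists_subset_overlapComponent [DecidableEq α] [DecidableEq β]
    (hF : ∀ x ∈ A, #(F x) ≤ 2) {a : α} (ha : a ∈ A)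
    {j : ℕ} (hj₀ : j ≠ 0) (hj : j ≤ #(overlapComponent A F a)) :
    ∃ D ⊆ overlapComponent A F a, a ∈ D ∧ #D = j ∧ #(D.biUnion F) ≤ j + 1 := by
  induction j with
  | zero => exact absurd rfl hj₀
  | succ j ih =>
  rcases Nat.eq_zero_or_pos j with rfl | hj₁
  · exact ⟨{a}, singleton_subset_iff.2 (mem_overlapComponent_self ha), mem_singleton_self a,
      card_singleton a, by simpa using (hF a ha).trans (by norm_num)⟩
  obtain ⟨D, hD, haD, hDj, hDσ⟩ := ih hj₁.ne' (by omega)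
  obtain ⟨b, hb, hbD⟩ : ∃ b ∈ overlapComponent A F a, b ∉ D :=
    not_subset.1 fun h => by have := card_le_card h; omega
  obtain ⟨p⟩ := (mem_overlapComponent.1 hb).2
  obtain ⟨d, -, hdD, hdD'⟩ := p.exists_boundary_dart D haD hbD
  obtain ⟨hyA, hxy⟩ := mem_and_not_disjoint_of_overlapGraph_adj d.adj
  have hyc : d.snd ∈ overlapComponent A F a :=
    mem_overlapComponent.2 ⟨hyA, (mem_overlapComponent.1 (hD hdD)).2.trans d.adj.reachable⟩
  refine ⟨insert d.snd D, insert_subset hyc hD, mem_insert_of_mem haD,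
    by rw [card_insert_of_notMem hdD', hDj], ?_⟩
  rw [biUnion_insert]
  refine (card_union_le_card_add_one (hF _ hyA) fun h => hxy ?_).trans (by omega)
  exact disjoint_of_subset_left (subset_biUnion_of_mem F hdD) h.symm

theorem card_biUnion_overlapComponent_le [DecidableEq α] [DecidableEq β]
    (hF : ∀ x ∈ A, #(F x) ≤ 2) {a : α} (ha : a ∈ A) :
    #((overlapComponent A F a).biUnion F) ≤ #(overlapComponent A F a) + 1 := by
  have hpos := card_pos.2 ⟨a, mem_overlapComponent_self (F := F) ha⟩
  obtain ⟨D, hD, -, hDc, hDσ⟩ := exists_subset_overlapComponent hF ha hpos.ne' le_rfl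
  rwa [eq_of_subset_of_card_le hD hDc.ge] at hDσ

theorem exists_subset_overlapComponent_card_biUnion_le [DecidableEq α] [DecidableEq β]
    (hF : ∀ x ∈ A, #(F x) ≤ 2) {a : α}
    (ha : a ∈ A) {u : ℕ} (hu : u ≤ #(overlapComponent A F a) + 1) :
    ∃ D ⊆ overlapComponent A F a, #(D.biUnion F) ≤ u ∧ u ≤ #D + 1 := by
  rcases le_or_gt u 1 with hu₁ | hu₁
  · exact ⟨∅, empty_subset _, by simp, by simpa using hu₁⟩
  obtain ⟨D, hD, -, hDc, hDσ⟩ := exists_subset_overlapComponent hF ha (j := u - 1) (by omega)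
    (by omega)
  exact ⟨D, hD, by omega, by omega⟩

theorem biUnion_image_overlapComponent [DecidableEq α] :
    (A.image (overlapComponent A F)).biUnion id = A := by
  refine (biUnion_subset.2 fun c hc => ?_).antisymm fun a ha => mem_biUnion.2
    ⟨_, mem_image_of_mem _ ha, mem_overlapComponent_self ha⟩
  obtain ⟨a, -, rfl⟩ := mem_image.1 hc
  exact overlapComponent_subset a

theorem pairwiseDisjoint_image_overlapComponent [DecidableEq α] :
    (A.image (overlapComponent A F) : Set (Finset α)).PairwiseDisjoint id := by
  rintro _ hc _ hd hcd
  obtain ⟨a, -, rfl⟩ := mem_image.1 hc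
  obtain ⟨b, -, rfl⟩ := mem_image.1 hd
  exact disjoint_overlapComponent hcd

theorem pairwiseDisjoint_biUnion_image_overlapComponent [DecidableEq α] [DecidableEq β] :
    (A.image (overlapComponent A F) : Set (Finset α)).PairwiseDisjoint (·.biUnion F) := by
  rintro _ hc _ hd hcd
  obtain ⟨a, -, rfl⟩ := mem_image.1 hc
  obtain ⟨b, -, rfl⟩ := mem_image.1 hd
  exact disjoint_biUnion_overlapComponent hcd

end OverlapComponents

theorem exists_small_set_containing_most {α β : Type*} [DecidableEq α] [DecidableEq β]
    (A : Finset α) (F : α → Finset β) (hF : ∀ a ∈ A, #(F a) ≤ 2) (m M : ℕ)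
    (hσ : #(A.biUnion F) ≤ m) (hA : #A ≤ m) (hM : m + #A + 4 ≤ 4 * M) :
    ∃ T : Finset β, #T ≤ M ∧ #A ≤ #{a ∈ A | F a ⊆ T} + M := by
  by_cases hfit : #(A.biUnion F) ≤ M
  · refine ⟨A.biUnion F, hfit, ?_⟩
    rw [filter_true_of_mem fun a ha => subset_biUnion_of_mem F ha]
    omega
  set C := A.image (overlapComponent A F)
  have hCA : C.biUnion id = A := biUnion_image_overlapComponent
  have hC : ∀ c ∈ C, ∃ a ∈ A, overlapComponent A F a = c := fun c hc => mem_image.1 hc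
  have hCdisj : (C : Set (Finset α)).PairwiseDisjoint id := pairwiseDisjoint_image_overlapComponent
  have hCσdisj : (C : Set (Finset α)).PairwiseDisjoint (·.biUnion F) :=
    pairwiseDisjoint_biUnion_image_overlapComponent
  have hCe : ∑ c ∈ C, #c = #A := by
    rw [← hCA, card_biUnion hCdisj]; rfl
  have hCv : ∑ c ∈ C, #(c.biUnion F) = #(A.biUnion F) := by
    rw [← card_biUnion hCσdisj, ← biUnion_biUnion]
    exact congrArg (fun s => #(s.biUnion F)) hCA
  obtain ⟨S, hSC, c, hc, hcS, u, hu, hcost, hvalue⟩ :=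
    exists_selection_of_le_add_one C card (fun c => #(c.biUnion F))
      (fun c hc => by obtain ⟨a, ha, rfl⟩ := hC c hc; exact card_biUnion_overlapComponent_le hF ha)
      m M (by omega) (by omega) (by omega) (by omega)
  obtain ⟨a, ha, rfl⟩ := hC c hc
  obtain ⟨D, hD, hDσ, hDu⟩ := exists_subset_overlapComponent_card_biUnion_le hF ha
    (hu.trans (card_biUnion_overlapComponent_le hF ha))
  refine ⟨S.biUnion (·.biUnion F) ∪ D.biUnion F, ?_, ?_⟩
  · calc #(S.biUnion (·.biUnion F) ∪ D.biUnion F)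
        ≤ ∑ c ∈ S, #(c.biUnion F) + #(D.biUnion F) :=
          (card_union_le _ _).trans (Nat.add_le_add_right card_biUnion_le _)
      _ ≤ M := by omega
  have hSD : Disjoint (S.biUnion id) D := by
    refine (disjoint_biUnion_left _ _ _).2 fun c' hc' => disjoint_of_subset_right hD ?_
    exact hCdisj (hSC hc') hc (ne_of_mem_of_not_mem hc' hcS)
  have hinside : S.biUnion id ∪ D ⊆ {a ∈ A | F a ⊆ S.biUnion (·.biUnion F) ∪ D.biUnion F} := by
    intro x hx
    rw [mem_filter]
    rcases mem_union.1 hx with hx | hx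
    · obtain ⟨c', hc', hxc'⟩ := mem_biUnion.1 hx
      exact ⟨hCA ▸ mem_biUnion.2 ⟨c', hSC hc', hxc'⟩, subset_union_left.trans' <|
        (subset_biUnion_of_mem F hxc').trans (subset_biUnion_of_mem (·.biUnion F) hc')⟩
    · exact ⟨overlapComponent_subset a (hD hx), subset_union_right.trans' <|
        subset_biUnion_of_mem F hx⟩
  have hcount := card_le_card hinside
  rw [card_union_of_disjoint hSD, card_biUnion (hCdisj.subset hSC)] at hcount
  simp only [id] at hcount
  omega

theorem exists_small_set_containing_most_of_card_nonempty {α β : Type*} [DecidableEq α]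
    [DecidableEq β] (A : Finset α) (F : α → Finset β) (hF : ∀ a ∈ A, #(F a) ≤ 2) (m M : ℕ)
    (hσ : #(A.biUnion F) ≤ m) (hA : #{a ∈ A | (F a).Nonempty} ≤ m)
    (hM : m + #{a ∈ A | (F a).Nonempty} + 4 ≤ 4 * M) :
    ∃ T : Finset β, #T ≤ M ∧ #A ≤ #{a ∈ A | F a ⊆ T} + M := by
  set A' := {a ∈ A | (F a).Nonempty}
  obtain ⟨T, hT, hA'⟩ :=
    exists_small_set_containing_most A' F (fun a ha => hF a (mem_filter.1 ha).1) m M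
      ((card_le_card (biUnion_subset_biUnion_of_subset_left F (filter_subset _ _))).trans hσ)
      hA hM
  refine ⟨T, hT, ?_⟩
  have hsplit : #A' + #{a ∈ A | ¬(F a).Nonempty} = #A := card_filter_add_card_filter_not _
  have hempty : {a ∈ A | ¬(F a).Nonempty} ⊆ {a ∈ A | F a ⊆ T} := by
    intro a ha
    rw [mem_filter, not_nonempty_iff_eq_empty] at ha
    exact mem_filter.2 ⟨ha.1, ha.2 ▸ empty_subset T⟩
  have hnonempty : {a ∈ A' | F a ⊆ T} ⊆ {a ∈ A | F a ⊆ T} :=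
    filter_subset_filter _ (filter_subset _ _)
  have hdisj : Disjoint {a ∈ A' | F a ⊆ T} {a ∈ A | ¬(F a).Nonempty} :=
    disjoint_of_subset_left (filter_subset _ _) (disjoint_filter_filter_not _ _ _)
  have hcount := card_le_card (union_subset hnonempty hempty)
  rw [card_union_of_disjoint hdisj] at hcount
  omega

section Bipartite

variable {V : Type} [DecidableEq V] [Fintype V] {G : SimpleGraph V} {A B : Finset V}

theorem IsBipartition.mem_right_of_adj_s2 (hbip : IsBipartition G A B) {a v : V} (ha : a ∈ A)
    (hav : G.Adj a v) : v ∈ B := by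
  rcases hbip.2.2 a v hav with ⟨-, hv⟩ | ⟨haB, -⟩
  · exact hv
  · exact absurd haB (disjoint_left.1 hbip.1 ha)

theorem IsBipartition.neighborFinset_subset [DecidableRel G.Adj] (hbip : IsBipartition G A B)
    {a : V} (ha : a ∈ A) : G.neighborFinset a ⊆ B :=
  fun _ hv => hbip.mem_right_of_adj_s2 ha ((G.mem_neighborFinset _ _).1 hv)

theorem IsBipartition.hasBihole [DecidableRel G.Adj] (hbip : IsBipartition G A B)
    {T : Finset V} {k : ℕ} (hA : k ≤ #{a ∈ A | G.neighborFinset a ⊆ T}) (hB : #T + k ≤ #B) :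
    HasBihole G A B k := by
  obtain ⟨X, hX, hXk⟩ := exists_subset_card_eq hA
  obtain ⟨Y, hY, hYk⟩ := exists_subset_card_eq (s := B \ T) (n := k)
    (by have := le_card_sdiff T B; omega)
  have hXA : X ⊆ A := hX.trans (filter_subset _ _)
  have hYB : Y ⊆ B := hY.trans sdiff_subset
  have hYA : Disjoint Y A := disjoint_of_subset_left hYB hbip.1.symm
  have hXB : Disjoint X B := disjoint_of_subset_left hXA hbip.1
  have hXY {x y : V} (hx : x ∈ X) (hy : y ∈ Y) : ¬G.Adj x y := fun hxy =>
    (mem_sdiff.1 (hY hy)).2 ((mem_filter.1 (hX hx)).2 ((G.mem_neighborFinset _ _).2 hxy))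
  refine ⟨X ∪ Y, ?_, ?_, ?_⟩
  · intro u hu v hv huv
    rcases hbip.2.2 u v huv with ⟨huA, hvB⟩ | ⟨huB, hvA⟩
    · have hu' := (mem_union.1 hu).resolve_right fun h => disjoint_left.1 hYA h huA
      have hv' := (mem_union.1 hv).resolve_left fun h => disjoint_left.1 hXB h hvB
      exact hXY hu' hv' huv
    · have hu' := (mem_union.1 hu).resolve_left fun h => disjoint_left.1 hXB h huB
      have hv' := (mem_union.1 hv).resolve_right fun h => disjoint_left.1 hYA h hvA
      exact hXY hv' hu' huv.symm
  · rwa [union_inter_distrib_right, inter_eq_left.2 hXA, disjoint_iff_inter_eq_empty.1 hYA,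
      union_empty]
  · rwa [union_inter_distrib_right, inter_eq_left.2 hYB, disjoint_iff_inter_eq_empty.1 hXB,
      empty_union]

end Bipartite

theorem forall_le_two_of_card_filter_eq {α : Type*} (s : Finset α) (f : α → ℕ)
    (h : #{x ∈ s | f x = 0} + #{x ∈ s | f x = 1} + #{x ∈ s | f x = 2} = #s) :
    ∀ x ∈ s, f x ≤ 2 := by
  classical
  have hfibre (i : ℕ) (hi : i ≤ 2) :
      #{x ∈ {x ∈ s | f x ≤ 2} | f x = i} = #{x ∈ s | f x = i} := by
    rw [filter_filter]
    exact congrArg card (filter_congr fun x _ => by omega)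
  have hsum := card_eq_sum_card_fiberwise (s := {x ∈ s | f x ≤ 2}) (t := range 3) (f := f)
    fun x hx => mem_range.2 (Nat.lt_succ_of_le (mem_filter.1 hx).2)
  simp only [sum_range_succ, sum_range_zero, zero_add, hfibre _ (by norm_num : (0 : ℕ) ≤ 2),
    hfibre _ (by norm_num : (1 : ℕ) ≤ 2), hfibre _ le_rfl] at hsum
  exact card_filter_eq_iff.1 (hsum.trans h)

/-- If `|A| = |B| = n₀ + n₁ + n₂` and exactly `nᵢ` vertices of `A` have degree
`i` for `i ∈ {0,1,2}`, then `G` has a bihole of order at least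
`(3/4)·n₀ + (1/2)·(n₁ + n₂) − 7/4`. -/
theorem stmt2 (n0 n1 n2 : ℕ)
    (V : Type) [DecidableEq V] [Fintype V] (G : SimpleGraph V) [DecidableRel G.Adj]
    (A B : Finset V) (hbip : IsBipartition G A B)
    (hA : A.card = n0 + n1 + n2) (hB : B.card = n0 + n1 + n2)
    (h0 : (A.filter (fun u => G.degree u = 0)).card = n0)
    (h1 : (A.filter (fun u => G.degree u = 1)).card = n1)
    (h2 : (A.filter (fun u => G.degree u = 2)).card = n2) :
    ∃ k : ℕ, HasBihole G A B k ∧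
      (k : ℝ) ≥ 3 / 4 * (n0 : ℝ) + 1 / 2 * ((n1 : ℝ) + (n2 : ℝ)) - 7 / 4 := by
  set K := (3 * n0 + 2 * n1 + 2 * n2 - 4) / 4
  have hK : 3 * n0 + 2 * n1 + 2 * n2 ≤ 4 * K + 7 := by omega
  suffices HasBihole G A B K from ⟨K, this, by
    have : (3 * n0 + 2 * n1 + 2 * n2 : ℝ) ≤ 4 * K + 7 := by exact_mod_cast hK
    linarith⟩
  rcases lt_or_ge (3 * n0 + 2 * n1 + 2 * n2) 8 with hsmall | hlarge
  · rw [show K = 0 by omega]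
    exact ⟨∅, by simp, by simp, by simp⟩
  have hdeg : ∀ a ∈ A, #(G.neighborFinset a) ≤ 2 := by
    simpa using forall_le_two_of_card_filter_eq A (G.degree ·) (by rw [h0, h1, h2, hA])
  have hpos : #{a ∈ A | (G.neighborFinset a).Nonempty} = n1 + n2 := by
    have := card_filter_add_card_filter_not (s := A) fun a => G.degree a = 0
    simp only [← card_pos, G.card_neighborFinset_eq_degree, Nat.pos_iff_ne_zero, ne_eq]
    omega
  obtain ⟨T, hT, hcount⟩ := exists_small_set_containing_most_of_card_nonempty A
    (G.neighborFinset ·) hdeg (n0 + n1 + n2) (n0 + n1 + n2 - K)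
    (hB ▸ card_le_card (biUnion_subset.2 fun a ha => hbip.neighborFinset_subset ha))
    (by omega) (by omega)
  exact hbip.hasBihole (T := T) (by omega) (by omega)
end

section
/- Let n₀ and n₁ be non-negative integers, and let G be a bipartite graph with partite sets A and B such that |A| = |B| = n₀ + n₁ and, for each i ∈ {0, 1}, exactly nᵢ vertices of A have degree i in G (so every vertex of A has degree at most 1). Then G has a bihole of order at least n₀ + n₁/2 − 1/2. -/
open Finset

/-- If `|A| = |B| = n₀ + n₁` and exactly `nᵢ` vertices of `A` have degree `i`
for `i ∈ {0,1}`, then `G` has a bihole of order at least `n₀ + n₁/2 − 1/2`. -/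
theorem stmt4 (n0 n1 : ℕ)
    (V : Type) [DecidableEq V] [Fintype V] (G : SimpleGraph V) [DecidableRel G.Adj]
    (A B : Finset V) (hbip : IsBipartition G A B)
    (hA : A.card = n0 + n1) (hB : B.card = n0 + n1)
    (h0 : (A.filter (fun u => G.degree u = 0)).card = n0)
    (h1 : (A.filter (fun u => G.degree u = 1)).card = n1) :
    ∃ k : ℕ, HasBihole G A B k ∧ (k : ℝ) ≥ (n0 : ℝ) + (n1 : ℝ) / 2 - 1 / 2 := by
  obtain ⟨hdisj, hcover, hedge⟩ := hbip
  set A0 := A.filter (fun u => G.degree u = 0) with hA0def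
  set A1 := A.filter (fun u => G.degree u = 1) with hA1def
  set k := n0 + n1 / 2 with hk
  -- choose S ⊆ A1 of size n1/2
  obtain ⟨S, hSsub, hScard⟩ := Finset.exists_subset_card_eq (h1 ▸ Nat.div_le_self n1 2 : n1 / 2 ≤ A1.card)
  -- neighbors of S
  set N := S.biUnion (fun u => G.neighborFinset u) with hN
  have hNcard : N.card ≤ n1 / 2 := by
    calc N.card ≤ ∑ u ∈ S, (G.neighborFinset u).card := Finset.card_biUnion_le
    _ = ∑ u ∈ S, 1 := by
        refine Finset.sum_congr rfl fun u hu => ?_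
        have := hSsub hu
        rw [hA1def, Finset.mem_filter] at this
        simpa [SimpleGraph.card_neighborFinset_eq_degree] using this.2
    _ = n1 / 2 := by simp [hScard]
  have hBNcard : k ≤ (B \ N).card := by
    have h1' : (B \ N).card ≥ B.card - N.card := Finset.le_card_sdiff N B
    omega
  obtain ⟨T, hTsub, hTcard⟩ := Finset.exists_subset_card_eq hBNcard
  have hTB : T ⊆ B := hTsub.trans (Finset.sdiff_subset)
  -- disjointness facts
  have hA0A : A0 ⊆ A := Finset.filter_subset _ _
  have hSA : S ⊆ A := hSsub.trans (Finset.filter_subset _ _)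
  have hA0S : Disjoint A0 S := by
    refine Finset.disjoint_left.2 fun u hu hu' => ?_
    have h0' := (Finset.mem_filter.1 hu).2
    have h1' := (Finset.mem_filter.1 (hSsub hu')).2
    omega
  refine ⟨k, ⟨A0 ∪ S ∪ T, ?_, ?_, ?_⟩, ?_⟩
  · -- independence
    intro u hu v hv hadj
    -- key claim: no vertex of A0 ∪ S is adjacent to a vertex of T
    have key : ∀ x ∈ A0 ∪ S, ∀ y ∈ T, ¬ G.Adj x y := by
      intro x hx y hy hxy
      have hyN : y ∈ G.neighborFinset x := by simpa using hxy
      rcases Finset.mem_union.1 hx with hx0 | hxS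
      · have : G.degree x = 0 := (Finset.mem_filter.1 hx0).2
        have : (G.neighborFinset x).card = 0 := by
          rwa [SimpleGraph.card_neighborFinset_eq_degree]
        rw [Finset.card_eq_zero] at this
        simp [this] at hyN
      · have : y ∈ N := Finset.mem_biUnion.2 ⟨x, hxS, hyN⟩
        exact (Finset.mem_sdiff.1 (hTsub hy)).2 this
    have hTnoadj : ∀ x ∈ T, ∀ y ∈ T, ¬ G.Adj x y := by
      intro x hx y hy hxy
      rcases hedge x y hxy with ⟨hx', hy'⟩ | ⟨hx', hy'⟩
      · exact (Finset.disjoint_left.1 hdisj hx') (hTB hx)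
      · exact (Finset.disjoint_left.1 hdisj hy') (hTB hy)
    have hASnoadj : ∀ x ∈ A0 ∪ S, ∀ y ∈ A0 ∪ S, ¬ G.Adj x y := by
      intro x hx y hy hxy
      have hxA : x ∈ A := by
        rcases Finset.mem_union.1 hx with h | h
        exacts [hA0A h, hSA h]
      have hyA : y ∈ A := by
        rcases Finset.mem_union.1 hy with h | h
        exacts [hA0A h, hSA h]
      rcases hedge x y hxy with ⟨hx', hy'⟩ | ⟨hx', hy'⟩
      · exact (Finset.disjoint_left.1 hdisj hyA) hy'
      · exact (Finset.disjoint_left.1 hdisj hxA) hx'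
    rcases Finset.mem_union.1 hu with hu' | hu' <;>
      rcases Finset.mem_union.1 hv with hv' | hv'
    · exact hASnoadj u hu' v hv' hadj
    · exact key u hu' v hv' hadj
    · exact key v hv' u hu' hadj.symm
    · exact hTnoadj u hu' v hv' hadj
  · -- card in A
    have hTA : Disjoint T A := by
      exact Finset.disjoint_of_subset_left hTB hdisj.symm
    have : (A0 ∪ S ∪ T) ∩ A = A0 ∪ S := by
      rw [Finset.union_inter_distrib_right, Finset.union_inter_distrib_right]
      rw [Finset.inter_eq_left.2 hA0A, Finset.inter_eq_left.2 hSA,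
        Finset.disjoint_iff_inter_eq_empty.1 hTA]
      simp
    rw [this, Finset.card_union_of_disjoint hA0S, h0, hScard]
  · -- card in B
    have : (A0 ∪ S ∪ T) ∩ B = T := by
      rw [Finset.union_inter_distrib_right, Finset.union_inter_distrib_right]
      rw [Finset.inter_eq_left.2 hTB,
        Finset.disjoint_iff_inter_eq_empty.1 (Finset.disjoint_of_subset_left hA0A hdisj),
        Finset.disjoint_iff_inter_eq_empty.1 (Finset.disjoint_of_subset_left hSA hdisj)]
      simp
    rw [this, hTcard]
  · -- numeric bound
    have h2 : n1 ≤ 2 * (n1 / 2) + 1 := by omega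
    have h2' : (n1 : ℝ) ≤ 2 * ((n1 / 2 : ℕ) : ℝ) + 1 := by exact_mod_cast h2
    have : (k : ℝ) = (n0 : ℝ) + ((n1 / 2 : ℕ) : ℝ) := by
      rw [hk]; push_cast; ring
    rw [this]; linarith
end

section
/- If G is a balanced bipartite graph of order 2n with n ≥ 2 that has at most 2n edges, then G has a bihole of order at least (n − 2)/3. -/
open Finset

lemma key {V : Type} [DecidableEq V] [Fintype V] (G : SimpleGraph V) [DecidableRel G.Adj]
    (A B : Finset V) (n : ℕ) (hd : Disjoint A B)
    (hadj : ∀ u v, G.Adj u v → (u ∈ A ∧ v ∈ B) ∨ (u ∈ B ∧ v ∈ A))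
    (hA : A.card = n) (hB : B.card = n)
    (hsum : ∑ v ∈ A, G.degree v ≤ 2 * n) :
    ∃ I : Finset V, (∀ u ∈ I, ∀ v ∈ I, ¬ G.Adj u v) ∧
      (I ∩ A).card = n / 3 ∧ (I ∩ B).card = n / 3 := by
  set k := n / 3 with hk
  set Alow := A.filter (fun v => G.degree v ≤ 2) with hAlow
  have hsub0 : Alow ⊆ A := by rw [hAlow]; exact Finset.filter_subset _ _
  have hsplit : Alow.card + (A \ Alow).card = n := by
    have h1 : (A \ Alow).card = A.card - Alow.card := Finset.card_sdiff_of_subset hsub0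
    have h2 : Alow.card ≤ A.card := Finset.card_le_card hsub0
    omega
  have hbig : 3 * (A \ Alow).card ≤ 2 * n := by
    calc 3 * (A \ Alow).card = ∑ _v ∈ A \ Alow, 3 := by
          rw [Finset.sum_const, smul_eq_mul, mul_comm]
      _ ≤ ∑ v ∈ A \ Alow, G.degree v := by
          apply Finset.sum_le_sum
          intro v hv
          simp only [hAlow, Finset.mem_sdiff, Finset.mem_filter, not_and, not_le] at hv
          exact hv.2 hv.1
      _ ≤ ∑ v ∈ A, G.degree v :=
          Finset.sum_le_sum_of_subset Finset.sdiff_subset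
      _ ≤ 2 * n := hsum
  have hlowcard : k ≤ Alow.card := by omega
  obtain ⟨S, hSsub, hScard⟩ := Finset.exists_subset_card_eq hlowcard
  have hSA : S ⊆ A := hSsub.trans hsub0
  have hSdeg : ∑ v ∈ S, G.degree v ≤ 2 * k := by
    calc ∑ v ∈ S, G.degree v ≤ ∑ _v ∈ S, 2 := by
          apply Finset.sum_le_sum
          intro v hv
          have := hSsub hv
          simp only [hAlow, Finset.mem_filter] at this
          exact this.2
      _ = 2 * k := by rw [Finset.sum_const, smul_eq_mul, hScard, mul_comm]
  set N := B.filter (fun b => ∃ u ∈ S, G.Adj u b) with hN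
  have hNcard : N.card ≤ 2 * k := by
    have hsub : N ⊆ S.biUnion (fun u => G.neighborFinset u) := by
      intro b hb
      simp only [hN, Finset.mem_filter] at hb
      obtain ⟨u, hu, hadjub⟩ := hb.2
      exact Finset.mem_biUnion.2 ⟨u, hu, (SimpleGraph.mem_neighborFinset _ _ _).2 hadjub⟩
    calc N.card ≤ (S.biUnion (fun u => G.neighborFinset u)).card := Finset.card_le_card hsub
      _ ≤ ∑ u ∈ S, (G.neighborFinset u).card := Finset.card_biUnion_le
      _ = ∑ u ∈ S, G.degree u := by simp [SimpleGraph.card_neighborFinset_eq_degree]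
      _ ≤ 2 * k := hSdeg
  have hBN : k ≤ (B \ N).card := by
    have hNsub : N ⊆ B := by rw [hN]; exact Finset.filter_subset _ _
    have h1 : (B \ N).card = B.card - N.card := Finset.card_sdiff_of_subset hNsub
    omega
  obtain ⟨T, hTsub, hTcard⟩ := Finset.exists_subset_card_eq hBN
  have hTB : T ⊆ B := hTsub.trans Finset.sdiff_subset
  refine ⟨S ∪ T, ?_, ?_, ?_⟩
  · intro u hu v hv huv
    have hnotST : ∀ a ∈ S, ∀ b ∈ T, ¬ G.Adj a b := by
      intro a ha b hb hab
      have hbN : b ∈ N := by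
        simp only [hN, Finset.mem_filter]
        exact ⟨hTB hb, a, ha, hab⟩
      have := hTsub hb
      simp only [Finset.mem_sdiff] at this
      exact this.2 hbN
    have hdis : ∀ x, x ∈ A → x ∈ B → False := fun x hxA hxB =>
      Finset.disjoint_left.mp hd hxA hxB
    rcases Finset.mem_union.mp hu with huS | huT <;>
      rcases Finset.mem_union.mp hv with hvS | hvT
    · rcases hadj u v huv with ⟨_, h2⟩ | ⟨h1, _⟩
      · exact hdis v (hSA hvS) h2
      · exact hdis u (hSA huS) h1
    · exact hnotST u huS v hvT huv
    · exact hnotST v hvS u huT huv.symm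
    · rcases hadj u v huv with ⟨h1, _⟩ | ⟨_, h2⟩
      · exact hdis u h1 (hTB huT)
      · exact hdis v h2 (hTB hvT)
  · have hTA : T ∩ A = ∅ := Finset.eq_empty_of_forall_notMem fun x hx => by
      rw [Finset.mem_inter] at hx
      exact Finset.disjoint_left.mp hd hx.2 (hTB hx.1)
    rw [Finset.union_inter_distrib_right, Finset.inter_eq_left.mpr hSA, hTA,
      Finset.union_empty, hScard]
  · have hSB : S ∩ B = ∅ := Finset.eq_empty_of_forall_notMem fun x hx => by
      rw [Finset.mem_inter] at hx
      exact Finset.disjoint_left.mp hd (hSA hx.1) hx.2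
    rw [Finset.union_inter_distrib_right, Finset.inter_eq_left.mpr hTB, hSB,
      Finset.empty_union, hTcard]


/-- If `G` is a balanced bipartite graph of order `2n`, `n ≥ 2`, with at most
`2n` edges, then `G` has a bihole of order at least `(n − 2)/3`. -/
theorem stmt5 (n : ℕ) (hn : n ≥ 2)
    (V : Type) [DecidableEq V] [Fintype V] (G : SimpleGraph V) [DecidableRel G.Adj]
    (A B : Finset V) (hbip : IsBipartition G A B)
    (hA : A.card = n) (hB : B.card = n)
    (hm : G.edgeFinset.card ≤ 2 * n) :
    ∃ k : ℕ, HasBihole G A B k ∧ (k : ℝ) ≥ ((n : ℝ) - 2) / 3 := by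
  obtain ⟨hd, hcov, hadj⟩ := hbip
  have htotal : ∑ v ∈ A, G.degree v + ∑ v ∈ B, G.degree v = 2 * G.edgeFinset.card := by
    rw [← Finset.sum_union hd, hcov]
    exact G.sum_degrees_eq_twice_card_edges
  have hreal : ((n / 3 : ℕ) : ℝ) ≥ ((n : ℝ) - 2) / 3 := by
    rw [ge_iff_le, div_le_iff₀ (by norm_num : (0:ℝ) < 3)]
    have h3 : n ≤ 3 * (n / 3) + 2 := by omega
    have := (Nat.cast_le (α := ℝ)).2 h3
    push_cast at this
    linarith
  by_cases hcase : ∑ v ∈ A, G.degree v ≤ 2 * n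
  · obtain ⟨I, hI, h1, h2⟩ := key G A B n hd hadj hA hB hcase
    exact ⟨n / 3, ⟨I, hI, h1, h2⟩, hreal⟩
  · have hcase' : ∑ v ∈ B, G.degree v ≤ 2 * n := by omega
    obtain ⟨I, hI, h1, h2⟩ := key G B A n hd.symm
      (fun u v h => (hadj u v h).symm) hB hA hcase'
    exact ⟨n / 3, ⟨I, hI, h2, h1⟩, hreal⟩
end

section
/- If G is a connected bipartite graph with partite sets A and B such that |A| < |B| and every vertex in A has degree at most 2, then G is a tree, |B| = |A| + 1, and every vertex in A has degree exactly 2. -/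
open Finset

namespace IsBipartition

variable {V : Type} [DecidableEq V] [Fintype V] {G : SimpleGraph V} {A B : Finset V}

theorem isBipartiteWith (h : IsBipartition G A B) : G.IsBipartiteWith A B :=
  ⟨disjoint_coe.mpr h.1, fun u v hadj => by simpa using h.2.2 u v hadj⟩

theorem card_add_card (h : IsBipartition G A B) : #A + #B = Fintype.card V := by
  rw [← card_union_of_disjoint h.1, h.2.1, card_univ]

end IsBipartition

namespace SimpleGraph

variable {V : Type} [Fintype V] {G : SimpleGraph V} [DecidableRel G.Adj]

theorem Connected.card_le_card_edgeFinset_add_one (h : G.Connected) :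
    Fintype.card V ≤ #G.edgeFinset + 1 := by
  simpa only [Nat.card_eq_fintype_card, card_edgeSet] using h.card_vert_le_card_edgeSet_add_one

theorem Connected.isTree_of_card_edgeFinset_add_one (h : G.Connected)
    (hcard : #G.edgeFinset + 1 = Fintype.card V) : G.IsTree :=
  isTree_iff_connected_and_card.mpr
    ⟨h, by simpa only [Nat.card_eq_fintype_card, card_edgeSet] using hcard⟩

end SimpleGraph

/-- If `G` is a connected bipartite graph with `|A| < |B|` and every vertex of
`A` has degree at most `2`, then `G` is a tree, `|B| = |A| + 1`, and every
vertex of `A` has degree exactly `2`. -/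
theorem stmt6 (V : Type) [DecidableEq V] [Fintype V] (G : SimpleGraph V) [DecidableRel G.Adj]
    (A B : Finset V) (hbip : IsBipartition G A B) (hconn : G.Connected)
    (hAB : A.card < B.card) (hdeg : ∀ u ∈ A, G.degree u ≤ 2) :
    G.IsTree ∧ B.card = A.card + 1 ∧ ∀ u ∈ A, G.degree u = 2 := by
  have hedges : ∑ a ∈ A, G.degree a = #G.edgeFinset :=
    SimpleGraph.isBipartiteWith_sum_degrees_eq_card_edges hbip.isBipartiteWith
  have hdeg_sum : ∑ a ∈ A, G.degree a ≤ 2 * #A := by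
    simpa only [sum_const, smul_eq_mul, mul_comm] using sum_le_sum hdeg
  have hspan := hconn.card_le_card_edgeFinset_add_one
  have hcard := hbip.card_add_card
  refine ⟨hconn.isTree_of_card_edgeFinset_add_one (by omega), by omega, ?_⟩
  -- the chain |V| - 1 ≤ |E| = ∑_A deg ≤ 2|A| ≤ |V| - 1 is tight, so every degree bound is attained
  refine (sum_eq_sum_iff_of_le hdeg).mp ?_
  rw [sum_const, smul_eq_mul]
  omega
end

section
/- If G is a connected bipartite graph with partite sets A and B such that |A| < |B| and every vertex in A has degree at most 2, then for every integer i with 0 ≤ i ≤ |A| there is an independent set I in G with |I ∩ A| = i and |I ∩ B| = |A| − i. -/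
open Finset

/-- Along a walk from inside `X` to outside `X` there is a crossing edge. -/
lemma crossing_lemma {V : Type} [DecidableEq V] {G : SimpleGraph V} {X : Finset V}
    {u v : V} (p : G.Walk u v) :
    u ∈ X → v ∉ X → ∃ x ∈ X, ∃ y, y ∉ X ∧ G.Adj x y := by
  induction p with
  | nil => intro hu hv; exact absurd hu hv
  | cons hadj q ih =>
    rename_i a b c
    intro hu hv
    by_cases hb : b ∈ X
    · exact ih hb hv
    · exact ⟨a, hu, b, hb, hadj⟩

/-- If `G` is a connected bipartite graph with `|A| < |B|` and every vertex of
`A` has degree at most `2`, then for every `0 ≤ i ≤ |A|` there is an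
independent set `I` with `|I ∩ A| = i` and `|I ∩ B| = |A| − i`. -/
theorem stmt7 (V : Type) [DecidableEq V] [Fintype V] (G : SimpleGraph V) [DecidableRel G.Adj]
    (A B : Finset V) (hbip : IsBipartition G A B) (hconn : G.Connected)
    (hAB : A.card < B.card) (hdeg : ∀ u ∈ A, G.degree u ≤ 2) :
    ∀ i : ℕ, i ≤ A.card →
      ∃ I : Finset V, (∀ u ∈ I, ∀ v ∈ I, ¬ G.Adj u v) ∧
        (I ∩ A).card = i ∧ (I ∩ B).card = A.card - i := by
  obtain ⟨hdisj, hcover, hedge⟩ := hbip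
  -- neighbors of vertices in A lie in B
  have hNB : ∀ a ∈ A, G.neighborFinset a ⊆ B := by
    intro a ha b hb
    rw [SimpleGraph.mem_neighborFinset] at hb
    rcases hedge a b hb with ⟨_, h⟩ | ⟨h, _⟩
    · exact h
    · exact absurd (hdisj.forall_ne_finset ha h) (fun hne => hne rfl)
  -- key lemma: for each i ≤ |A| there is S ⊆ A of size i whose neighborhood
  -- has at most i+1 vertices
  have key : ∀ i : ℕ, i ≤ A.card → ∃ S : Finset V, S ⊆ A ∧ S.card = i ∧
      (S.biUnion (fun a => G.neighborFinset a)).card ≤ i + 1 := by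
    intro i
    induction i with
    | zero =>
      intro _
      exact ⟨∅, empty_subset _, rfl, by simp⟩
    | succ n ih =>
      intro hn
      obtain ⟨S, hSA, hScard, hNS⟩ := ih (Nat.le_of_succ_le hn)
      rcases S.eq_empty_or_nonempty with hS | hS
      · -- S = ∅ : n = 0, just pick any vertex of A
        have hA : A.Nonempty := card_pos.mp (by omega)
        obtain ⟨a, ha⟩ := hA
        have hn0 : n = 0 := by rw [hS] at hScard; simpa using hScard.symm
        subst hn0
        refine ⟨{a}, by simpa using ha, by simp, ?_⟩
        have : ({a} : Finset V).biUnion (fun a => G.neighborFinset a) = G.neighborFinset a := by simp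
        rw [this, SimpleGraph.card_neighborFinset_eq_degree]
        have := hdeg a ha
        omega
      · -- S nonempty: find a new vertex y of A adjacent to N(S)
        set NS := S.biUnion (fun a => G.neighborFinset a) with hNSdef
        have hNSB : NS ⊆ B := by
          intro b hb
          rw [mem_biUnion] at hb
          obtain ⟨a, haS, hab⟩ := hb
          exact hNB a (hSA haS) hab
        -- some vertex of A is outside S
        have hAS : ∃ a0 ∈ A, a0 ∉ S := by
          by_contra h
          push_neg at h
          have : A ⊆ S := h
          have := card_le_card this
          omega
        obtain ⟨a0, ha0A, ha0S⟩ := hAS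
        have ha0X : a0 ∉ S ∪ NS := by
          simp only [mem_union, not_or]
          exact ⟨ha0S, fun h => (hdisj.forall_ne_finset ha0A (hNSB h)) rfl⟩
        obtain ⟨s, hs⟩ := hS
        obtain ⟨x, hx, y, hy, hxy⟩ :=
          crossing_lemma ((hconn s a0).some) (mem_union_left _ hs) ha0X
        -- x must be in NS (if x ∈ S then y ∈ NS ⊆ X, contradiction)
        have hxNS : x ∈ NS := by
          rcases mem_union.mp hx with hxS | hxNS
          · exact absurd (mem_union_right _ (mem_biUnion.mpr ⟨x, hxS, (SimpleGraph.mem_neighborFinset _ _ _).mpr hxy⟩)) hy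
          · exact hxNS
        -- hence x ∈ B, so y ∈ A
        have hyA : y ∈ A := by
          rcases hedge x y hxy with ⟨hxA, _⟩ | ⟨_, hyA⟩
          · exact absurd (hdisj.forall_ne_finset hxA (hNSB hxNS)) (fun h => h rfl)
          · exact hyA
        have hyS : y ∉ S := fun h => hy (mem_union_left _ h)
        refine ⟨insert y S, insert_subset hyA hSA, by rw [card_insert_of_notMem hyS, hScard], ?_⟩
        have hbi : (insert y S).biUnion (fun a => G.neighborFinset a) = NS ∪ (G.neighborFinset y \ NS) := by
          rw [biUnion_insert, ← hNSdef, union_comm NS, sdiff_union_self_eq_union]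
        rw [hbi, card_union_of_disjoint sdiff_disjoint.symm]
        -- x is a neighbor of y already in NS
        have hxny : x ∈ G.neighborFinset y := (SimpleGraph.mem_neighborFinset _ _ _).mpr hxy.symm
        have hsub : G.neighborFinset y \ NS ⊆ (G.neighborFinset y).erase x := by
          intro z hz
          rw [mem_erase]
          exact ⟨fun h => (mem_sdiff.mp hz).2 (h ▸ hxNS), (mem_sdiff.mp hz).1⟩
        have h1 : (G.neighborFinset y \ NS).card ≤ (G.neighborFinset y).card - 1 := by
          have := card_le_card hsub
          rwa [card_erase_of_mem hxny] at this
        have h2 : (G.neighborFinset y).card ≤ 2 := by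
          rw [SimpleGraph.card_neighborFinset_eq_degree]; exact hdeg y hyA
        omega
  -- main construction
  intro i hi
  obtain ⟨S, hSA, hScard, hNS⟩ := key i hi
  set NS := S.biUnion (fun a => G.neighborFinset a) with hNSdef
  have hNSB : NS ⊆ B := by
    intro b hb
    rw [hNSdef, mem_biUnion] at hb
    obtain ⟨a, haS, hab⟩ := hb
    exact hNB a (hSA haS) hab
  have hBNS : A.card - i ≤ (B \ NS).card := by
    have h1 : (B \ NS).card = B.card - NS.card := card_sdiff_of_subset hNSB
    omega
  obtain ⟨T, hTB, hTcard⟩ := Finset.exists_subset_card_eq hBNS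
  have hTB' : T ⊆ B := hTB.trans (sdiff_subset)
  refine ⟨S ∪ T, ?_, ?_, ?_⟩
  · -- independence
    intro u hu v hv hadj
    rcases mem_union.mp hu with huS | huT <;> rcases mem_union.mp hv with hvS | hvT
    · rcases hedge u v hadj with ⟨_, hvB⟩ | ⟨huB, _⟩
      · exact (hdisj.forall_ne_finset (hSA hvS) hvB) rfl
      · exact (hdisj.forall_ne_finset (hSA huS) huB) rfl
    · -- u ∈ S, v ∈ T : v ∈ NS, but T avoids NS
      exact (mem_sdiff.mp (hTB hvT)).2 (mem_biUnion.mpr ⟨u, huS, (SimpleGraph.mem_neighborFinset _ _ _).mpr hadj⟩)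
    · exact (mem_sdiff.mp (hTB huT)).2 (mem_biUnion.mpr ⟨v, hvS, (SimpleGraph.mem_neighborFinset _ _ _).mpr hadj.symm⟩)
    · rcases hedge u v hadj with ⟨huA, _⟩ | ⟨_, hvA⟩
      · exact (hdisj.forall_ne_finset huA (hTB' huT)) rfl
      · exact (hdisj.forall_ne_finset hvA (hTB' hvT)) rfl
  · -- (S ∪ T) ∩ A = S
    have : (S ∪ T) ∩ A = S := by
      apply Finset.ext
      intro z
      simp only [mem_inter, mem_union]
      constructor
      · rintro ⟨hz1 | hz2, hzA⟩
        · exact hz1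
        · exact absurd (hdisj.forall_ne_finset hzA (hTB' hz2)) (fun h => h rfl)
      · intro hz
        exact ⟨Or.inl hz, hSA hz⟩
    rw [this, hScard]
  · -- (S ∪ T) ∩ B = T
    have : (S ∪ T) ∩ B = T := by
      apply Finset.ext
      intro z
      simp only [mem_inter, mem_union]
      constructor
      · rintro ⟨hz1 | hz2, hzB⟩
        · exact absurd (hdisj.forall_ne_finset (hSA hz1) hzB) (fun h => h rfl)
        · exact hz2
      · intro hz
        exact ⟨Or.inr hz, hTB' hz⟩
    rw [this, hTcard]
end

section
/- For every even positive integer i, there is a bipartite graph G with partite sets A and B such that |A| = |B| = i + 2i², exactly i vertices of A are isolated, all other vertices of A have degree exactly 2, and every bihole in G has order at most i² + (3/4)·i. (This graph consists of i isolated vertices, all in A, together with i vertex-disjoint paths, each of order 4i + 1, whose endpoints all belong to B; it shows that the coefficient 3/4 of n₀ in the bound α̃(0^{n₀},1^{n₁},2^{n₂}) ≥ (3/4)n₀ + (1/2)(n₁+n₂) − 7/4 is best possible.) -/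
/-!
On a path with vertices `0, …, 2m`, an independent set with no odd vertex has at most `m + 1`
vertices, and one containing an odd vertex has at most `m`; in both cases
`(m + 1) · #odd + m · #even ≤ m (m + 1)`. A bihole of order `k` in `i` isolated vertices plus
`i` such paths has `k` even path vertices and at least `k - i` odd ones, so summing over the paths
gives `(2m + 1) k ≤ i (m + 1)²`. For `m = 2i` this reads
`(4i + 1) k ≤ i (2i + 1)² = (4i + 1) (i² + 3i/4) + i/4`, and as `i/4 < (4i + 1)/4`, the integer
`4k` is at most `4i² + 3i`.
-/

open Finset

open SimpleGraph

section PathGraph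

variable {n m : ℕ}

lemma val_add_one_ne_of_isIndepSet_pathGraph {S : Finset (Fin n)}
    (hS : (pathGraph n).IsIndepSet (S : Set (Fin n))) {p q : Fin n} (hp : p ∈ S) (hq : q ∈ S) :
    (p : ℕ) + 1 ≠ q := fun h ↦
  hS hp hq (fun hpq ↦ by simp [hpq] at h) (pathGraph_adj.2 (Or.inl h))

variable {S : Finset (Fin (2 * m + 1))}

/-- Each of the pairs `{2t, 2t + 1}` meets an independent set at most once. -/
lemma card_le_of_isIndepSet_pathGraph (hS : (pathGraph (2 * m + 1)).IsIndepSet (S : Set _)) :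
    #S ≤ m + 1 := by
  have hsucc := fun {p q} ↦ val_add_one_ne_of_isIndepSet_pathGraph hS (p := p) (q := q)
  simpa using card_le_card_of_injOn (t := range (m + 1)) (fun p : Fin (2 * m + 1) ↦ (p : ℕ) / 2)
    (fun p _ ↦ by simp; omega)
    (fun p hp q hq h ↦ Fin.ext (by have := hsucc hp hq; have := hsucc hq hp; simp at h; omega))

/-- Slot `t` takes `{2t, 2t + 1}` up to the odd element `s` and `{2t + 1, 2t + 2}` after it, so
`s` and `s + 1` share a slot; as `s + 1 ∉ S`, `m` slots suffice. -/
lemma card_le_of_isIndepSet_pathGraph_of_odd_mem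
    (hS : (pathGraph (2 * m + 1)).IsIndepSet (S : Set _)) {s : Fin (2 * m + 1)} (hs : s ∈ S)
    (hodd : Odd (s : ℕ)) : #S ≤ m := by
  have hsucc := fun {p q} ↦ val_add_one_ne_of_isIndepSet_pathGraph hS (p := p) (q := q)
  obtain ⟨t, ht⟩ := hodd
  simpa using card_le_card_of_injOn (t := range m)
    (fun p : Fin (2 * m + 1) ↦ if (p : ℕ) ≤ s then (p : ℕ) / 2 else ((p : ℕ) - 1) / 2)
    (fun p hp ↦ by have := hsucc hs hp; simp; split_ifs <;> omega)
    (fun p hp q hq h ↦ Fin.ext (by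
      have := hsucc hp hq; have := hsucc hq hp; have := hsucc hs hp; have := hsucc hs hq
      simp at h; split_ifs at h <;> omega))

lemma weighted_card_le_of_isIndepSet_pathGraph
    (hS : (pathGraph (2 * m + 1)).IsIndepSet (S : Set _)) :
    (m + 1) * #{p ∈ S | Odd p.val} + m * #{p ∈ S | Even p.val} ≤ m * (m + 1) := by
  have hsplit : #{p ∈ S | Odd p.val} + #{p ∈ S | Even p.val} = #S := by
    simpa only [Nat.not_odd_iff_even] using card_filter_add_card_filter_not (s := S) (Odd ·.val)
  rcases Nat.eq_zero_or_pos #{p ∈ S | Odd p.val} with hodd | hodd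
  · have := card_le_of_isIndepSet_pathGraph hS
    rw [hodd] at hsplit ⊢
    nlinarith
  · obtain ⟨s, hs⟩ := card_pos.1 hodd
    rw [mem_filter] at hs
    have := card_le_of_isIndepSet_pathGraph_of_odd_mem hS hs.1 hs.2
    nlinarith

end PathGraph

lemma card_filter_odd_fin (m : ℕ) : #{p : Fin (2 * m + 1) | Odd p.val} = m := by
  refine Eq.trans ?_ (card_range m)
  refine card_bij (fun p _ ↦ p.val / 2) (fun p hp ↦ ?_) (fun p hp q hq h ↦ ?_) (fun t ht ↦ ?_)
  · obtain ⟨t, ht⟩ := (mem_filter.1 hp).2; simp; omega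
  · obtain ⟨s, hs⟩ := (mem_filter.1 hp).2; obtain ⟨t, ht⟩ := (mem_filter.1 hq).2
    exact Fin.ext (by omega)
  · exact ⟨⟨2 * t + 1, by simp at ht; omega⟩, by simp, by simp; omega⟩

lemma card_filter_even_fin (m : ℕ) : #{p : Fin (2 * m + 1) | Even p.val} = m + 1 := by
  have := card_filter_add_card_filter_not (s := univ) fun p : Fin (2 * m + 1) ↦ Odd p.val
  simp only [Nat.not_odd_iff_even, card_filter_odd_fin, card_univ, Fintype.card_fin] at this
  omega

lemma card_eq_sum_card_slice {α β : Type*} [Fintype α] [Fintype β] [DecidableEq α] [DecidableEq β]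
    (J : Finset (α × β)) : #J = ∑ a, #{b | (a, b) ∈ J} := by
  simp only [card_filter, ← Fintype.sum_prod_type']
  rw [← card_filter, filter_mem_eq_inter, univ_inter]

lemma weighted_card_le_of_isIndepSet_boxProd {α : Type*} [Fintype α] [DecidableEq α] {m : ℕ}
    {J : Finset (α × Fin (2 * m + 1))}
    (hJ : ((⊥ : SimpleGraph α) □ pathGraph (2 * m + 1)).IsIndepSet (J : Set _)) :
    (m + 1) * #{x ∈ J | Odd x.2.val} + m * #{x ∈ J | Even x.2.val} ≤
      Fintype.card α * (m * (m + 1)) := by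
  have hslice (a : α) : (pathGraph (2 * m + 1)).IsIndepSet ({p | (a, p) ∈ J} : Finset _) :=
    fun p hp q hq hpq hadj ↦ hJ (x := (a, p)) (y := (a, q)) (by simpa using hp) (by simpa using hq)
      (by simpa using hpq) (boxProd_adj.2 (Or.inr ⟨hadj, rfl⟩))
  rw [card_eq_sum_card_slice, card_eq_sum_card_slice, mul_sum, mul_sum, ← sum_add_distrib]
  refine (sum_le_card_nsmul _ _ (m * (m + 1)) fun a _ ↦ ?_).trans_eq (by simp)
  simpa [filter_filter] using weighted_card_le_of_isIndepSet_pathGraph (hslice a)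

def isolatedAndPaths (i n : ℕ) : SimpleGraph (Fin i ⊕ Fin i × Fin n) := ⊥ ⊕g (⊥ □ pathGraph n)

def partA (i n : ℕ) : Finset (Fin i ⊕ Fin i × Fin n) :=
  univ.disjSum (univ ×ˢ ({p | Odd p.val} : Finset (Fin n)))

def partB (i n : ℕ) : Finset (Fin i ⊕ Fin i × Fin n) :=
  (∅ : Finset (Fin i)).disjSum (univ ×ˢ ({p | Even p.val} : Finset (Fin n)))

section IsolatedAndPaths

variable {i n m : ℕ}

@[simp] lemma isolatedAndPaths_not_adj_inl_left {a : Fin i} {v : Fin i ⊕ Fin i × Fin n} :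
    ¬ (isolatedAndPaths i n).Adj (.inl a) v := by
  rcases v with b | y <;> simp [isolatedAndPaths]

@[simp] lemma isolatedAndPaths_not_adj_inl_right {a : Fin i} {v : Fin i ⊕ Fin i × Fin n} :
    ¬ (isolatedAndPaths i n).Adj v (.inl a) :=
  fun h ↦ isolatedAndPaths_not_adj_inl_left h.symm

@[simp] lemma isolatedAndPaths_adj_inr {x y : Fin i × Fin n} :
    (isolatedAndPaths i n).Adj (.inr x) (.inr y) ↔ x.1 = y.1 ∧ (pathGraph n).Adj x.2 y.2 := by
  simp [isolatedAndPaths, boxProd_adj, and_comm]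

lemma isBipartition_isolatedAndPaths :
    IsBipartition (isolatedAndPaths i n) (partA i n) (partB i n) := by
  refine ⟨disjoint_left.2 ?_, ?_, ?_⟩
  · rintro (a | x) <;> simp [partA, partB]
  · ext (a | x) <;> simp [partA, partB, or_comm, Nat.even_or_odd]
  · rintro (a | x) (b | y) h
    iterate 3 simp at h
    rw [isolatedAndPaths_adj_inr, pathGraph_adj] at h
    simp only [partA, partB, inr_mem_disjSum, mem_product, mem_filter, mem_univ, true_and]
    grind

lemma card_partA : #(partA i (2 * m + 1)) = i + i * m := by
  rw [partA, card_disjSum, card_product, card_filter_odd_fin, card_univ, Fintype.card_fin]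

lemma card_partB : #(partB i (2 * m + 1)) = i * (m + 1) := by
  rw [partB, card_disjSum, card_product, card_filter_even_fin, card_univ, Fintype.card_fin,
    card_empty, zero_add]

lemma mul_le_of_hasBihole_isolatedAndPaths {k : ℕ}
    (h : HasBihole (isolatedAndPaths i (2 * m + 1)) (partA i (2 * m + 1)) (partB i (2 * m + 1)) k) :
    (2 * m + 1) * k ≤ i * (m + 1) ^ 2 := by
  obtain ⟨I, hI, hA, hB⟩ := h
  have hJ : ((⊥ : SimpleGraph (Fin i)) □ pathGraph (2 * m + 1)).IsIndepSet (I.toRight : Set _) :=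
    fun x hx y hy _ hxy ↦ hI _ (mem_toRight.1 hx) _ (mem_toRight.1 hy)
      (by simpa [isolatedAndPaths] using hxy)
  have hB' : #{x ∈ I.toRight | Even x.2.val} = k := by
    rw [← hB, ← card_toLeft_add_card_toRight, toLeft_inter, toRight_inter, partB, toLeft_disjSum,
      toRight_disjSum, inter_empty, card_empty, zero_add]
    congr 1; ext x
    simp
  have hA' : k ≤ i + #{x ∈ I.toRight | Odd x.2.val} := by
    rw [← hA, ← card_toLeft_add_card_toRight, toLeft_inter, toRight_inter, partA, toLeft_disjSum,
      toRight_disjSum]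
    gcongr
    · exact (card_le_univ _).trans_eq (Fintype.card_fin i)
    · intro x; simp
  have := weighted_card_le_of_isIndepSet_boxProd hJ
  rw [Fintype.card_fin, hB'] at this
  nlinarith [Nat.mul_le_mul_left (m + 1) hA']

lemma isolatedAndPaths_degree_inl [DecidableRel (isolatedAndPaths i n).Adj] (a : Fin i) :
    (isolatedAndPaths i n).degree (.inl a) = 0 :=
  (degree_eq_zero _ _).2 fun _ ↦ isolatedAndPaths_not_adj_inl_left

lemma isolatedAndPaths_degree_inr_of_odd [DecidableRel (isolatedAndPaths i (2 * m + 1)).Adj]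
    {x : Fin i × Fin (2 * m + 1)} (hx : Odd x.2.val) :
    (isolatedAndPaths i (2 * m + 1)).degree (.inr x) = 2 := by
  obtain ⟨t, ht⟩ := hx
  have := x.2.isLt
  rw [← card_neighborFinset_eq_degree, card_eq_two]
  refine ⟨.inr (x.1, ⟨x.2 - 1, by omega⟩), .inr (x.1, ⟨x.2 + 1, by omega⟩), by simp, ?_⟩
  ext (b | y)
  · simp
  · simp [pathGraph_adj, Prod.ext_iff, Fin.ext_iff, eq_comm (a := x.1)]
    omega

variable [DecidableRel (isolatedAndPaths i (2 * m + 1)).Adj]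

lemma card_filter_degree_eq_zero_partA :
    #{u ∈ partA i (2 * m + 1) | (isolatedAndPaths i (2 * m + 1)).degree u = 0} = i := by
  have : {u ∈ partA i (2 * m + 1) | (isolatedAndPaths i (2 * m + 1)).degree u = 0} =
      univ.map .inl := by
    ext (a | x)
    · simp [partA, isolatedAndPaths_degree_inl]
    · simpa [partA] using fun hx ↦ (isolatedAndPaths_degree_inr_of_odd hx).trans_ne two_ne_zero
  rw [this, card_map, card_univ, Fintype.card_fin]

lemma degree_eq_two_of_mem_partA {u} (hu : u ∈ partA i (2 * m + 1))
    (h : (isolatedAndPaths i (2 * m + 1)).degree u ≠ 0) :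
    (isolatedAndPaths i (2 * m + 1)).degree u = 2 := by
  rcases u with a | x
  · exact absurd (isolatedAndPaths_degree_inl a) h
  · exact isolatedAndPaths_degree_inr_of_odd (by simpa [partA] using hu)

end IsolatedAndPaths

theorem stmt8_general (i : ℕ) :
    ∃ (V : Type) (_ : DecidableEq V) (_ : Fintype V) (G : SimpleGraph V) (_ : DecidableRel G.Adj)
      (A B : Finset V),
      IsBipartition G A B ∧
      A.card = i + 2 * i ^ 2 ∧ B.card = i + 2 * i ^ 2 ∧
      (A.filter (fun u => G.degree u = 0)).card = i ∧
      (∀ u ∈ A, G.degree u ≠ 0 → G.degree u = 2) ∧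
      (∀ k : ℕ, HasBihole G A B k → (k : ℝ) ≤ (i : ℝ) ^ 2 + 3 / 4 * (i : ℝ)) := by
  classical
  refine ⟨_, inferInstance, inferInstance, isolatedAndPaths i (2 * (2 * i) + 1), inferInstance,
    partA i _, partB i _, isBipartition_isolatedAndPaths, ?_, ?_, card_filter_degree_eq_zero_partA,
    fun u hu ↦ degree_eq_two_of_mem_partA hu, fun k hk ↦ ?_⟩
  · rw [card_partA]; ring
  · rw [card_partB]; ring
  · have hbound := mul_le_of_hasBihole_isolatedAndPaths hk
    have h4k : 4 * k ≤ 4 * i ^ 2 + 3 * i := by nlinarith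
    have : (4 : ℝ) * k ≤ 4 * i ^ 2 + 3 * i := by exact_mod_cast h4k
    linarith

/-- For every even positive integer `i`, there is a bipartite graph `G` with
`|A| = |B| = i + 2i²` in which exactly `i` vertices of `A` are isolated, all
other vertices of `A` have degree exactly `2`, and every bihole of `G` has
order at most `i² + (3/4)·i`. -/
theorem stmt8 (i : ℕ) (hi : Even i) (hpos : 0 < i) :
    ∃ (V : Type) (_ : DecidableEq V) (_ : Fintype V) (G : SimpleGraph V) (_ : DecidableRel G.Adj)
      (A B : Finset V),
      IsBipartition G A B ∧
      A.card = i + 2 * i ^ 2 ∧ B.card = i + 2 * i ^ 2 ∧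
      (A.filter (fun u => G.degree u = 0)).card = i ∧
      (∀ u ∈ A, G.degree u ≠ 0 → G.degree u = 2) ∧
      (∀ k : ℕ, HasBihole G A B k → (k : ℝ) ≤ (i : ℝ) ^ 2 + 3 / 4 * (i : ℝ)) :=
  stmt8_general i
end
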